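/- arXiv:1105.5032 — 10 statements merged into one kernel-verified Lean document; each statement's English description precedes it below -/
import Mathlib

section
/- Let C be a finite candidate set with at least two elements and let L be a linear order on C with L-minimum candidate c_min and L-maximum candidate c_max. If a linear-order vote v on C is single-caved with respect to L, then the most preferred candidate of v is either c_min or c_max. -/
variable {α : Type*} [DecidableEq α]

/-- `l` is a linear-order vote on the finite candidate set `s`:
a duplicate-free list containing exactly the elements of `s`;
earlier in the list means more preferred (for a societal axis `L`,
earlier in the list means smaller in the order `L`). -/
def IsVoteOn (s : Finset α) (l : List α) : Prop :=
  l.Nodup ∧ ∀ a, a ∈ l ↔ a ∈ s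

/-- `a` is ranked strictly before `b` in the list `l`. -/
def Prefers (l : List α) (a b : α) : Prop :=
  l.idxOf a < l.idxOf b

instance (l : List α) (a b : α) : Decidable (Prefers l a b) :=
  inferInstanceAs (Decidable (_ < _))

/-- `v` is single-peaked with respect to the societal axis `L`. -/
def SinglePeaked (L v : List α) : Prop :=
  ∀ c1 c2 c3, c1 ∈ L → c2 ∈ L → c3 ∈ L →
    ((Prefers L c1 c2 ∧ Prefers L c2 c3) ∨ (Prefers L c3 c2 ∧ Prefers L c2 c1)) →
    Prefers v c1 c2 → Prefers v c2 c3

/-- `v` is single-caved with respect to the societal axis `L`. -/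
def SingleCaved (L v : List α) : Prop :=
  ∀ c1 c2 c3, c1 ∈ L → c2 ∈ L → c3 ∈ L →
    ((Prefers L c1 c2 ∧ Prefers L c2 c3) ∨ (Prefers L c3 c2 ∧ Prefers L c2 c1)) →
    Prefers v c2 c1 → Prefers v c3 c2

/-- The restriction of a ranking/order `l` to the subset `C` of candidates. -/
def restrictList (C : Finset α) (l : List α) : List α :=
  l.filter (fun a => decide (a ∈ C))

/-- The plurality score of candidate `c` in the election with candidate set `C`
and votes `V` (each vote a linear order on a set containing `C`): the number of
votes whose most preferred candidate among `C` is `c`. -/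
def pluralityScore (C : Finset α) (V : List (List α)) (c : α) : ℕ :=
  V.countP (fun v => decide ((restrictList C v).head? = some c))

/-- `p` is a plurality winner of the election `(C, V)`. -/
def PluralityWinner (C : Finset α) (V : List (List α)) (p : α) : Prop :=
  p ∈ C ∧ ∀ c ∈ C, pluralityScore C V c ≤ pluralityScore C V p

/-- `l'` is obtained from `l` by one swap of adjacent elements. -/
def AdjSwap (l l' : List α) : Prop :=
  ∃ (u w : List α) (x y : α), l = u ++ x :: y :: w ∧ l' = u ++ y :: x :: w

/-- `WithinSwaps k l l'` : `l` can be transformed into `l'` by a sequence of at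
most `k` adjacent swaps. -/
def WithinSwaps : ℕ → List α → List α → Prop
  | 0, l, l' => l = l'
  | (k+1), l, l' => l = l' ∨ ∃ l'', AdjSwap l l'' ∧ WithinSwaps k l'' l'

/-- `v` is swoon-SP w.r.t. axis `L` on candidate set `C`: the restriction of `v` to
`C` minus `v`'s most preferred candidate is single-peaked with respect to the
restriction of `L` to that set. -/
def SwoonSP (C : Finset α) (L v : List α) : Prop :=
  ∀ t, v.head? = some t →
    SinglePeaked (restrictList (C.erase t) L) (restrictList (C.erase t) v)

/-- The `k`-radius neighborhood of `c` with respect to `C'` and the axis `L`: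
if `C'`, listed in `L`-increasing order, is `d_1, ..., d_r` and `c = d_i`, this
is `{d_j : |i - j| ≤ k}`. -/
def nbhd (k : ℕ) (L : List α) (C' : Finset α) (c : α) : Finset α :=
  ((restrictList C' L).drop ((restrictList C' L).idxOf c - k)).take
    ((restrictList C' L).idxOf c + k + 1 - ((restrictList C' L).idxOf c - k))
    |>.toFinset

/-- The plurality election `(C, V)` is `k`-local with respect to axis `L`. -/
def KLocal (k : ℕ) (L : List α) (C : Finset α) (V : List (List α)) : Prop :=
  ∀ C' ⊆ C, ∀ c ∈ C', pluralityScore (nbhd k L C' c) V c = pluralityScore C' V c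

/-- In a `(a1, a2, 0)` scoring election over three candidates, the number of points
candidate `c` receives from (unit-weight) vote `v`. -/
def score3 (a1 a2 : ℕ) (v : List α) (c : α) : ℕ :=
  if v.idxOf c = 0 then a1 else if v.idxOf c = 1 then a2 else 0

/-- Indicator that the vote `v` does not veto (rank last) candidate `c`. -/
def vetoInd (v : List α) (c : α) : ℕ :=
  if v.getLast? = some c then 0 else 1

/-- The approval score of `c` given approval ballots `W`. -/
def approvalScore {I : Type*} [Fintype I] (W : I → Finset α) (c : α) : ℕ :=
  (Finset.univ.filter fun i => c ∈ W i).card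

/-- `p` is an approval winner of the election with candidate set `C` and ballots `W`. -/
def ApprovalWinner (C : Finset α) {I : Type*} [Fintype I] (W : I → Finset α) (p : α) : Prop :=
  p ∈ C ∧ ∀ c ∈ C, approvalScore W c ≤ approvalScore W p

/-! If the top candidate `t` of `v` were neither endpoint of the axis `L = a … b`, then `a, t, b`
would lie on `L` in this order with `v` preferring `t` to `a`; single-cavedness would then force
`v` to prefer `b` to its own top candidate `t`. -/

section Prefers

variable {l : List α} {a b : α}

theorem prefers_of_head?_eq_some (h : l.head? = some a) (hb : b ≠ a) : Prefers l a b := by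
  obtain ⟨l, rfl⟩ := List.head?_eq_some_iff.mp h
  simp [Prefers, List.idxOf_cons_ne l hb.symm]

theorem not_prefers_of_head?_eq_some (h : l.head? = some a) : ¬ Prefers l b a := by
  obtain ⟨l, rfl⟩ := List.head?_eq_some_iff.mp h
  simp [Prefers]

theorem List.Nodup.prefers_of_getLast?_eq_some (hl : l.Nodup) (h : l.getLast? = some b)
    (ha : a ∈ l) (hab : a ≠ b) : Prefers l a b := by
  obtain ⟨l, rfl⟩ := List.getLast?_eq_some_iff.mp h
  have hbl : b ∉ l := fun hb =>
    (List.nodup_append.mp hl).2.2 b hb b (List.mem_singleton_self b) rfl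
  have hal : a ∈ l := by simpa [hab] using ha
  rw [Prefers, List.idxOf_append_of_mem hal, List.idxOf_append_of_notMem hbl]
  simpa using List.idxOf_lt_length_of_mem hal

end Prefers

theorem SingleCaved.not_between_of_head?_eq_some {L v : List α} {a t b : α}
    (hsc : SingleCaved L v) (ht : v.head? = some t) (haL : a ∈ L) (htL : t ∈ L) (hbL : b ∈ L)
    (hat : Prefers L a t) (htb : Prefers L t b) : False :=
  not_prefers_of_head?_eq_some ht <|
    hsc a t b haL htL hbL (.inl ⟨hat, htb⟩) <|
      prefers_of_head?_eq_some ht (ne_of_apply_ne L.idxOf hat.ne)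

theorem singleCaved_top_is_endpoint_general
    (C : Finset α) (L v : List α)
    (hL : IsVoteOn C L) (hv : IsVoteOn C v) (hsc : SingleCaved L v) :
    v.head? = L.head? ∨ v.head? = L.getLast? := by
  have hmem (c : α) : c ∈ L ↔ c ∈ v := (hL.2 c).trans (hv.2 c).symm
  cases ht : v.head? with
  | none =>
    obtain rfl : v = [] := List.head?_eq_none_iff.mp ht
    obtain rfl : L = [] := List.eq_nil_iff_forall_not_mem.mpr fun c => by simpa using hmem c
    simp
  | some t =>
    have htL : t ∈ L := (hmem t).mpr (List.mem_of_mem_head? ht)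
    have hL0 : L ≠ [] := List.ne_nil_of_mem htL
    obtain ⟨a, ha⟩ : ∃ a, L.head? = some a := ⟨_, List.head?_eq_some_head hL0⟩
    obtain ⟨b, hb⟩ : ∃ b, L.getLast? = some b := ⟨_, List.getLast?_eq_some_getLast hL0⟩
    by_contra! hne
    have hta : t ≠ a := fun h => hne.1 (by rw [ha, h])
    have htb : t ≠ b := fun h => hne.2 (by rw [hb, h])
    exact hsc.not_between_of_head?_eq_some ht (List.mem_of_mem_head? ha) htL
      (List.mem_of_mem_getLast? hb) (prefers_of_head?_eq_some ha hta)
      (hL.1.prefers_of_getLast?_eq_some hb htL htb)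

/-- In a single-caved vote, the most preferred candidate is one of the
two endpoints (the `L`-minimum or the `L`-maximum) of the societal axis. -/
theorem singleCaved_top_is_endpoint
    (C : Finset α) (hC : 2 ≤ C.card) (L v : List α)
    (hL : IsVoteOn C L) (hv : IsVoteOn C v) (hsc : SingleCaved L v) :
    v.head? = L.head? ∨ v.head? = L.getLast? :=
  singleCaved_top_is_endpoint_general C L v hL hv hsc
end

section
/- Let C be a finite candidate set with at least two elements, let a be a candidate not in C, let L be a linear order on C ∪ {a}, and let V be a finite collection of linear-order votes on C ∪ {a}, each single-caved with respect to L. Let p ∈ C. If p is not a plurality winner of the election (C, V) (with votes restricted to C), then p is not a plurality winner of the election (C ∪ {a}, V). -/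
variable {α : Type*} [DecidableEq α]

/-!
A single-caved vote's favourite among any candidate set is one of the two extremes of that set
on the axis `L`, so a candidate strictly between two others on the axis scores zero. Suppose `p`
wins `(insert a C, V)` while some `c ∈ C` beats `p` in `(C, V)`. Adding `a` can only move a vote
from its favourite in `C` to `a`, so `p` loses no points by deleting `a`, while
`score_C c ≤ score_{C+a} c + score_{C+a} a`. Of the three distinct candidates `p`, `c`, `a`, one
lies between the other two on the axis and scores zero in `insert a C`; in each case the
inequalities contradict `score_C p < score_C c`.
-/

theorem List.countP_le_countP_add_countP {β : Type*} {p q r : β → Bool} {l : List β}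
    (h : ∀ x ∈ l, p x → q x ∨ r x) : l.countP p ≤ l.countP q + l.countP r := by
  induction l with
  | nil => simp
  | cons x l ih =>
    have hx := h x List.mem_cons_self
    have := ih fun y hy => h y (List.mem_cons_of_mem x hy)
    simp only [List.countP_cons]
    split_ifs <;> simp_all <;> omega

section Restrict

variable {C S : Finset α} {v : List α} {t : α}

theorem exists_head?_restrictList_eq_some {x : α} (hxC : x ∈ C) (hxv : x ∈ v) :
    ∃ t, (restrictList C v).head? = some t := by
  have hx : x ∈ restrictList C v := List.mem_filter.mpr ⟨hxv, by simpa using hxC⟩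
  obtain ⟨t, r, h⟩ := List.exists_cons_of_ne_nil (List.ne_nil_of_mem hx)
  exact ⟨t, by simp [h]⟩

theorem head?_restrictList_eq_some_iff :
    (restrictList C v).head? = some t ↔
      t ∈ C ∧ t ∈ v ∧ ∀ x ∈ v, x ∈ C → v.idxOf t ≤ v.idxOf x := by
  have top_min : ∀ {s}, (restrictList C v).head? = some s →
      s ∈ C ∧ s ∈ v ∧ ∀ x ∈ v, x ∈ C → v.idxOf s ≤ v.idxOf x := by
    intro s h
    induction v with
    | nil => simp [restrictList] at h
    | cons b l ih =>
      by_cases hb : b ∈ C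
      · obtain rfl : b = s := by simpa [restrictList, hb] using h
        exact ⟨hb, List.mem_cons_self, fun x _ _ => by simp⟩
      · simp only [restrictList, List.filter_cons, hb, decide_false] at h ih
        obtain ⟨hsC, hsl, hmin⟩ := ih h
        have hbs : b ≠ s := fun e => hb (e ▸ hsC)
        refine ⟨hsC, List.mem_cons_of_mem b hsl, fun x hx hxC => ?_⟩
        have hbx : b ≠ x := fun e => hb (e ▸ hxC)
        have hxl : x ∈ l := (List.mem_cons.mp hx).resolve_left hbx.symm
        simpa [List.idxOf_cons_ne _ hbs, List.idxOf_cons_ne _ hbx] using hmin x hxl hxC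
  refine ⟨top_min, fun ⟨htC, htv, hmin⟩ => ?_⟩
  obtain ⟨s, hs⟩ := exists_head?_restrictList_eq_some htC htv
  obtain ⟨hsC, hsv, hsmin⟩ := top_min hs
  obtain rfl : s = t :=
    (List.idxOf_inj hsv).mp (le_antisymm (hsmin t htv htC) (hmin s hsv hsC))
  exact hs

theorem head?_restrictList_eq_some_of_subset (hCS : C ⊆ S)
    (ht : (restrictList S v).head? = some t) (htC : t ∈ C) :
    (restrictList C v).head? = some t := by
  obtain ⟨-, htv, hmin⟩ := head?_restrictList_eq_some_iff.mp ht
  exact head?_restrictList_eq_some_iff.mpr ⟨htC, htv, fun x hx hxC => hmin x hx (hCS hxC)⟩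

end Restrict

section Plurality

variable {C S : Finset α} {V : List (List α)}

theorem pluralityScore_le_of_subset (hCS : C ⊆ S) {x : α} (hx : x ∈ C) :
    pluralityScore S V x ≤ pluralityScore C V x :=
  List.countP_mono_left fun v _ h => by
    simpa using head?_restrictList_eq_some_of_subset hCS (by simpa using h) hx

theorem pluralityScore_le_pluralityScore_insert_add (a c : α) :
    pluralityScore C V c ≤ pluralityScore (insert a C) V c + pluralityScore (insert a C) V a := by
  refine List.countP_le_countP_add_countP fun v _ hc => ?_
  simp only [decide_eq_true_eq] at hc ⊢
  obtain ⟨hcC, hcv, -⟩ := head?_restrictList_eq_some_iff.mp hc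
  obtain ⟨t, ht⟩ :=
    exists_head?_restrictList_eq_some (Finset.mem_insert_of_mem hcC) hcv (C := insert a C)
  rcases Finset.mem_insert.mp (head?_restrictList_eq_some_iff.mp ht).1 with rfl | htC
  · exact Or.inr ht
  · have := head?_restrictList_eq_some_of_subset (Finset.subset_insert a C) ht htC
    exact Or.inl (by rwa [Option.some_inj.mp (hc.symm.trans this)])

end Plurality

def IsAxisInterior (L : List α) (C : Finset α) (t : α) : Prop :=
  ∃ m ∈ C, ∃ M ∈ C, Prefers L m t ∧ Prefers L t M

theorem isAxisInterior_of_three {L : List α} {C : Finset α} (hCL : ∀ x ∈ C, x ∈ L)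
    {x y z : α} (hx : x ∈ C) (hy : y ∈ C) (hz : z ∈ C) (hxy : x ≠ y) (hyz : y ≠ z)
    (hxz : x ≠ z) :
    IsAxisInterior L C x ∨ IsAxisInterior L C y ∨ IsAxisInterior L C z := by
  have hxy' := mt (List.idxOf_inj (hCL x hx)).mp hxy
  have hyz' := mt (List.idxOf_inj (hCL y hy)).mp hyz
  have hxz' := mt (List.idxOf_inj (hCL x hx)).mp hxz
  by_contra! h
  obtain ⟨hx', hy', hz'⟩ := h
  simp only [IsAxisInterior, Prefers, not_exists, not_and, not_lt] at hx' hy' hz'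
  have := hx' y hy z hz; have := hx' z hz y hy
  have := hy' x hx z hz; have := hy' z hz x hx
  have := hz' x hx y hy; have := hz' y hy x hx
  omega

theorem SingleCaved.not_isAxisInterior {L v : List α} {C : Finset α} {t : α}
    (hsc : SingleCaved L v) (hCL : ∀ x ∈ C, x ∈ L) (hCv : ∀ x ∈ C, x ∈ v)
    (ht : (restrictList C v).head? = some t) : ¬ IsAxisInterior L C t := by
  rintro ⟨m, hm, M, hM, hmt, htM⟩
  obtain ⟨htC, htv, hmin⟩ := head?_restrictList_eq_some_iff.mp ht
  have htm : Prefers v t m := (hmin m (hCv m hm) hm).lt_of_ne fun e =>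
    hmt.ne (congrArg L.idxOf ((List.idxOf_inj htv).mp e).symm)
  exact (hsc m t M (hCL m hm) (hCL t htC) (hCL M hM) (Or.inl ⟨hmt, htM⟩) htm).not_ge
    (hmin M (hCv M hM) hM)

theorem pluralityScore_eq_zero_of_isAxisInterior {L : List α} {C : Finset α}
    {V : List (List α)} (hV : ∀ v ∈ V, SingleCaved L v ∧ ∀ x ∈ C, x ∈ v)
    (hCL : ∀ x ∈ C, x ∈ L) {t : α} (ht : IsAxisInterior L C t) : pluralityScore C V t = 0 :=
  List.countP_eq_zero.mpr fun v hv h =>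
    (hV v hv).1.not_isAxisInterior hCL (hV v hv).2 (by simpa using h) ht

theorem singleCaved_addOneCandidate_no_new_winner_general
    (C : Finset α) (a : α) (ha : a ∉ C)
    (L : List α) (hL : IsVoteOn (insert a C) L)
    (V : List (List α))
    (hV : ∀ v ∈ V, IsVoteOn (insert a C) v ∧ SingleCaved L v)
    (p : α) (hp : p ∈ C)
    (hlose : ¬ PluralityWinner C V p) :
    ¬ PluralityWinner (insert a C) V p := by
  rintro ⟨-, hwin⟩
  obtain ⟨c, hc, hbeat⟩ : ∃ c ∈ C, pluralityScore C V p < pluralityScore C V c := by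
    by_contra! h
    exact hlose ⟨hp, h⟩
  have hCL : ∀ x ∈ insert a C, x ∈ L := fun x hx => (hL.2 x).2 hx
  have hV' : ∀ v ∈ V, SingleCaved L v ∧ ∀ x ∈ insert a C, x ∈ v :=
    fun v hv => ⟨(hV v hv).2, fun x hx => ((hV v hv).1.2 x).2 hx⟩
  have hzero : pluralityScore (insert a C) V p = 0 ∨ pluralityScore (insert a C) V c = 0 ∨
      pluralityScore (insert a C) V a = 0 := by
    have hpc : p ≠ c := fun h => (h ▸ hbeat).false
    have hpa : p ≠ a := fun h => ha (h ▸ hp)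
    have hca : c ≠ a := fun h => ha (h ▸ hc)
    refine (isAxisInterior_of_three hCL (Finset.mem_insert_of_mem hp)
      (Finset.mem_insert_of_mem hc) (Finset.mem_insert_self a C) hpc hca hpa).imp ?_ (.imp ?_ ?_)
      <;> exact pluralityScore_eq_zero_of_isAxisInterior hV' hCL
  have hc_le := pluralityScore_le_pluralityScore_insert_add (C := C) (V := V) a c
  have hp_le := pluralityScore_le_of_subset (V := V) (Finset.subset_insert a C) hp
  have hwin_c := hwin c (Finset.mem_insert_of_mem hc)
  have hwin_a := hwin a (Finset.mem_insert_self a C)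
  omega

/-- In a single-caved electorate, adding one candidate `a` cannot make a
candidate `p` that was not a plurality winner into a plurality winner. -/
theorem singleCaved_addOneCandidate_no_new_winner
    (C : Finset α) (hC : 2 ≤ C.card) (a : α) (ha : a ∉ C)
    (L : List α) (hL : IsVoteOn (insert a C) L)
    (V : List (List α))
    (hV : ∀ v ∈ V, IsVoteOn (insert a C) v ∧ SingleCaved L v)
    (p : α) (hp : p ∈ C)
    (hlose : ¬ PluralityWinner C V p) :
    ¬ PluralityWinner (insert a C) V p :=
  singleCaved_addOneCandidate_no_new_winner_general C a ha L hL V hV p hp hlose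
end

section
/- Let k be a positive integer, let C = {c_1, ..., c_m} be a finite candidate set, let L be a linear order on C with c_1 L c_2 L ... L c_m, and let V be a finite collection of linear-order votes on C, each of which is Dodgson_k-SP with respect to L. Then the plurality election (C, V) is (k+1)-local with respect to L. -/
variable {α : Type*} [DecidableEq α]

/-- A vote `v` is Dodgson_k-SP w.r.t. axis `L` on candidate set `C` if `v` is within
`k` adjacent swaps of some linear order on `C` that is single-peaked w.r.t. `L`. -/
def DodgsonSP (k : ℕ) (C : Finset α) (L v : List α) : Prop :=
  ∃ v', IsVoteOn C v' ∧ SinglePeaked L v' ∧ WithinSwaps k v v'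

/-!
If a vote `v`, within `k` adjacent swaps of a single-peaked `v'`, ranked `c` first among the
`(k + 1)`-neighbourhood of `c` in `C'` but some other `d` first among `C'`, then `d` would lie
outside that neighbourhood, so the `k + 1` neighbours of `c` on the side of `d` lie strictly
between `c` and `d` on the axis and `v` ranks all of them below both `c` and `d`.
Single-peakedness forces `v'` to rank each of them above `c` or above `d`, which gives `k + 1`
pairs ordered oppositely by `v` and `v'`; but `k` adjacent swaps reverse at most `k` pairs.
-/

def Between (L : List α) (a b c : α) : Prop :=
  (Prefers L a b ∧ Prefers L b c) ∨ (Prefers L c b ∧ Prefers L b a)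

theorem Prefers.ne {l : List α} {a b : α} (h : Prefers l a b) : a ≠ b :=
  fun hab => lt_irrefl _ (hab ▸ h)

theorem Prefers.asymm {l : List α} {a b : α} (h : Prefers l a b) : ¬ Prefers l b a :=
  lt_asymm h

theorem prefers_of_not_prefers {l : List α} {a b : α} (ha : a ∈ l) (hab : a ≠ b)
    (h : ¬ Prefers l b a) : Prefers l a b :=
  lt_of_le_of_ne (not_lt.1 h) fun h => hab ((List.idxOf_inj ha).1 h)

theorem Between.ne {L : List α} {a b c : α} (h : Between L a b c) : b ≠ a ∧ b ≠ c := by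
  rcases h with ⟨hab, hbc⟩ | ⟨hcb, hba⟩
  · exact ⟨hab.ne.symm, hbc.ne⟩
  · exact ⟨hba.ne, hcb.ne.symm⟩

theorem prefers_of_prefers_filter (p : α → Bool) {l : List α} {x y : α}
    (hx : x ∈ l.filter p) (hy : y ∈ l.filter p) (h : Prefers (l.filter p) x y) :
    Prefers l x y := by
  induction l with
  | nil => simp at hx
  | cons a t ih =>
    unfold Prefers at *
    by_cases hpa : p a
    · simp only [List.filter_cons_of_pos hpa, List.mem_cons] at hx hy h
      grind
    · simp only [List.filter_cons_of_neg hpa] at hx hy h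
      grind

theorem between_of_between_filter (p : α → Bool) {l : List α} {a b c : α}
    (ha : a ∈ l.filter p) (hb : b ∈ l.filter p) (hc : c ∈ l.filter p)
    (h : Between (l.filter p) a b c) : Between l a b c := by
  rcases h with ⟨hab, hbc⟩ | ⟨hcb, hba⟩
  · exact .inl ⟨prefers_of_prefers_filter p ha hb hab, prefers_of_prefers_filter p hb hc hbc⟩
  · exact .inr ⟨prefers_of_prefers_filter p hc hb hcb, prefers_of_prefers_filter p hb ha hba⟩

theorem eq_of_prefers_of_not_prefers_swap {u t : List α} {x y a b : α}
    (hnd : (u ++ x :: y :: t).Nodup) (hab : Prefers (u ++ x :: y :: t) a b)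
    (h : ¬ Prefers (u ++ y :: x :: t) a b) : a = x ∧ b = y := by
  have hxu : x ∉ u := by grind
  have hyu : y ∉ u := by grind
  have hxy : x ≠ y := by grind
  unfold Prefers at *
  have hx : (u ++ x :: y :: t).idxOf x = u.length := by grind
  have hy : (u ++ x :: y :: t).idxOf y = u.length + 1 := by grind
  have hx' : (u ++ y :: x :: t).idxOf x = u.length + 1 := by grind
  have hy' : (u ++ y :: x :: t).idxOf y = u.length := by grind
  have hother : ∀ z ∈ u ++ x :: y :: t, z ≠ x → z ≠ y →
      (u ++ y :: x :: t).idxOf z = (u ++ x :: y :: t).idxOf z ∧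
      (u ++ x :: y :: t).idxOf z ≠ u.length ∧ (u ++ x :: y :: t).idxOf z ≠ u.length + 1 := by
    intro z hz hzx hzy
    refine ⟨?_, fun h => hzx ((List.idxOf_inj hz).1 (h.trans hx.symm)),
      fun h => hzy ((List.idxOf_inj hz).1 (h.trans hy.symm))⟩
    by_cases hzu : z ∈ u
    · simp [List.idxOf_append_of_mem hzu]
    · simp [List.idxOf_append_of_notMem hzu, List.idxOf_cons_ne _ (Ne.symm hzx),
        List.idxOf_cons_ne _ (Ne.symm hzy)]
  have ha : a ∈ u ++ x :: y :: t := List.idxOf_lt_length_iff.1 (by grind)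
  have hb : b ∈ u ++ x :: y :: t := List.idxOf_lt_length_iff.1 (by grind)
  by_cases hax : a = x <;> by_cases hay : a = y <;> by_cases hbx : b = x <;>
    by_cases hby : b = y <;> subst_vars <;> grind

theorem eq_empty_of_prefers_of_prefers {v : List α} {P : Finset (α × α)}
    (hP : ∀ q ∈ P, Prefers v q.1 q.2 ∧ Prefers v q.2 q.1) : P = ∅ :=
  Finset.eq_empty_of_forall_notMem fun q hq => (hP q hq).1.asymm (hP q hq).2

theorem card_le_of_withinSwaps {n : ℕ} {v v' : List α} (hv : v.Nodup) (h : WithinSwaps n v v')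
    {P : Finset (α × α)} (hP : ∀ q ∈ P, Prefers v q.1 q.2 ∧ Prefers v' q.2 q.1) :
    P.card ≤ n := by
  induction n generalizing v P with
  | zero =>
    subst h
    simp [eq_empty_of_prefers_of_prefers hP]
  | succ n ih =>
    rcases h with rfl | ⟨w, ⟨u, t, x, y, rfl, rfl⟩, hw⟩
    · simp [eq_empty_of_prefers_of_prefers hP]
    have hP' : ∀ q ∈ P.erase (x, y), Prefers (u ++ y :: x :: t) q.1 q.2 ∧ Prefers v' q.2 q.1 := by
      intro q hq
      obtain ⟨hqxy, hq⟩ := Finset.mem_erase.1 hq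
      refine ⟨by_contra fun hsw => hqxy ?_, (hP q hq).2⟩
      obtain ⟨h1, h2⟩ := eq_of_prefers_of_not_prefers_swap hv (hP q hq).1 hsw
      exact Prod.ext h1 h2
    have hv' : (u ++ y :: x :: t).Nodup :=
      ((List.Perm.swap y x t).append_left u).nodup_iff.1 hv
    have := ih hv' hw hP'
    have := Finset.pred_card_le_card_erase (s := P) (a := (x, y))
    omega

/-- By single-peakedness `v'` ranks each `e ∈ E` above `c` or above `d`, so each `e` yields a
pair `(c, e)` or `(d, e)` that `v` and `v'` order oppositely. -/
theorem card_le_of_singlePeaked_of_withinSwaps {k : ℕ} {L v v' : List α} (hv : v.Nodup)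
    (hLv' : ∀ a ∈ L, a ∈ v') (hSP : SinglePeaked L v') (hWS : WithinSwaps k v v')
    {c d : α} (hc : c ∈ L) (hd : d ∈ L) {E : Finset α}
    (hE : ∀ e ∈ E, e ∈ L ∧ Between L c e d ∧ Prefers v c e ∧ Prefers v d e) :
    E.card ≤ k := by
  let f : α → α × α := fun e => if Prefers v' e c then (c, e) else (d, e)
  have hf : Set.InjOn f E := fun e₁ _ e₂ _ h => by
    simpa [f, apply_ite Prod.snd] using congrArg Prod.snd h
  rw [← Finset.card_image_of_injOn hf]
  refine card_le_of_withinSwaps hv hWS fun q hq => ?_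
  obtain ⟨e, he, rfl⟩ := Finset.mem_image.1 hq
  obtain ⟨heL, hbetw, hce, hde⟩ := hE e he
  by_cases hec : Prefers v' e c
  · simp only [f, if_pos hec]
    exact ⟨hce, hec⟩
  · simp only [f, if_neg hec]
    exact ⟨hde, hSP c e d hc heL hd hbetw
      (prefers_of_not_prefers (hLv' c hc) hbetw.ne.1.symm hec)⟩

theorem mem_restrictList {S : Finset α} {l : List α} {x : α} :
    x ∈ restrictList S l ↔ x ∈ l ∧ x ∈ S := by
  simp [restrictList]

theorem nodup_restrictList {S : Finset α} {l : List α} (hl : l.Nodup) :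
    (restrictList S l).Nodup :=
  hl.filter _

theorem head?_restrictList_eq_some_iff_s4 {S : Finset α} {v : List α} {c : α} :
    (restrictList S v).head? = some c ↔
      c ∈ S ∧ c ∈ v ∧ ∀ x ∈ S, x ∈ v → x ≠ c → Prefers v c x := by
  induction v with
  | nil => simp [restrictList]
  | cons a t ih =>
    simp only [restrictList, Prefers] at *
    by_cases ha : a ∈ S <;> grind

theorem head?_restrictList_of_subset {S T : Finset α} {v : List α} {c : α} (hTS : T ⊆ S)
    (hc : c ∈ T) (h : (restrictList S v).head? = some c) :
    (restrictList T v).head? = some c := by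
  rw [head?_restrictList_eq_some_iff_s4] at h ⊢
  exact ⟨hc, h.2.1, fun x hx => h.2.2 x (hTS hx)⟩

theorem exists_head?_restrictList {S : Finset α} {v : List α} {c : α} (hcS : c ∈ S)
    (hcv : c ∈ v) : ∃ d, (restrictList S v).head? = some d :=
  Option.isSome_iff_exists.1 <|
    List.isSome_head?.2 (List.ne_nil_of_mem (mem_restrictList.2 ⟨hcv, hcS⟩))

theorem List.Nodup.mem_take_drop_iff {l : List α} (h : l.Nodup) {a b : ℕ} {x : α} :
    x ∈ (l.drop a).take b ↔ x ∈ l ∧ a ≤ l.idxOf x ∧ l.idxOf x < a + b := by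
  simp only [List.mem_iff_getElem, List.getElem_take, List.getElem_drop, List.length_take,
    List.length_drop]
  constructor
  · rintro ⟨m, hm, rfl⟩
    rw [h.idxOf_getElem]
    exact ⟨⟨_, _, rfl⟩, by omega, by omega⟩
  · rintro ⟨⟨m, hm, rfl⟩, h1, h2⟩
    rw [h.idxOf_getElem] at h1 h2
    exact ⟨m - a, by omega, by congr 1; omega⟩

theorem mem_nbhd_iff {k : ℕ} {L : List α} {C' : Finset α} {c x : α} (hL : L.Nodup) :
    x ∈ nbhd k L C' c ↔ x ∈ restrictList C' L ∧
      (restrictList C' L).idxOf c - k ≤ (restrictList C' L).idxOf x ∧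
      (restrictList C' L).idxOf x ≤ (restrictList C' L).idxOf c + k := by
  unfold nbhd
  rw [List.mem_toFinset, (nodup_restrictList hL).mem_take_drop_iff]
  constructor <;> rintro ⟨hx, hlo, hhi⟩ <;> exact ⟨hx, hlo, by omega⟩

theorem nbhd_subset (k : ℕ) (L : List α) (C' : Finset α) (c : α) : nbhd k L C' c ⊆ C' :=
  fun _ hx => (mem_restrictList.1
    (List.mem_of_mem_drop (List.mem_of_mem_take (List.mem_toFinset.1 hx)))).2

theorem self_mem_nbhd {k : ℕ} {L : List α} {C' : Finset α} {c : α} (hL : L.Nodup)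
    (hc : c ∈ restrictList C' L) : c ∈ nbhd k L C' c :=
  (mem_nbhd_iff hL).2 ⟨hc, by omega, by omega⟩

/-- The witnesses are the `k + 1` candidates of `C'` next to `c` on the side of `d`. -/
theorem exists_card_eq_between_of_not_mem_nbhd {k : ℕ} {L : List α} {C' : Finset α} {c d : α}
    (hL : L.Nodup) (hc : c ∈ restrictList C' L) (hd : d ∈ restrictList C' L)
    (hdN : d ∉ nbhd (k + 1) L C' c) :
    ∃ E : Finset α, E.card = k + 1 ∧
      ∀ e ∈ E, e ∈ nbhd (k + 1) L C' c ∧ Between (restrictList C' L) c e d := by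
  simp only [mem_nbhd_iff hL] at hdN ⊢
  set R := restrictList C' L
  have hR : R.Nodup := nodup_restrictList hL
  have hcR : R.idxOf c < R.length := List.idxOf_lt_length_iff.2 hc
  have hdR : R.idxOf d < R.length := List.idxOf_lt_length_iff.2 hd
  have hfar : R.idxOf d + (k + 1) < R.idxOf c ∨ R.idxOf c + (k + 1) < R.idxOf d := by
    simp only [hd, true_and] at hdN
    omega
  set s := if R.idxOf c < R.idxOf d then R.idxOf c + 1 else R.idxOf c - (k + 1) with hs
  refine ⟨((R.drop s).take (k + 1)).toFinset, ?_, fun e he => ?_⟩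
  · rw [List.toFinset_card_of_nodup ((hR.sublist (List.drop_sublist _ _)).sublist
      (List.take_sublist _ _)), List.length_take, List.length_drop]
    split_ifs at hs <;> omega
  · obtain ⟨heR, hlo, hhi⟩ := hR.mem_take_drop_iff.1 (List.mem_toFinset.1 he)
    refine ⟨⟨heR, ?_, ?_⟩, ?_⟩
    · split_ifs at hs <;> omega
    · split_ifs at hs <;> omega
    · unfold Between Prefers
      split_ifs at hs <;> omega

theorem head?_restrictList_nbhd_eq_some_iff {k : ℕ} {C C' : Finset α} {L v : List α} {c : α}
    (hL : IsVoteOn C L) (hC' : C' ⊆ C) (hc : c ∈ C') (hv : IsVoteOn C v)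
    (hdk : DodgsonSP k C L v) :
    (restrictList (nbhd (k + 1) L C' c) v).head? = some c ↔
      (restrictList C' v).head? = some c := by
  have hmemR : ∀ x ∈ C', x ∈ restrictList C' L := fun x hx =>
    mem_restrictList.2 ⟨(hL.2 x).2 (hC' hx), hx⟩
  have hcN := self_mem_nbhd (k := k + 1) hL.1 (hmemR c hc)
  refine ⟨fun hN => ?_, head?_restrictList_of_subset (nbhd_subset _ _ _ _) hcN⟩
  obtain ⟨d, hd⟩ := exists_head?_restrictList hc ((hv.2 c).2 (hC' hc))
  obtain rfl | hdc := eq_or_ne d c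
  · exact hd
  have hdC' := (head?_restrictList_eq_some_iff_s4.1 hd).1
  have hdN : d ∉ nbhd (k + 1) L C' c := fun hdN => hdc <| Option.some_injective _ <|
    (head?_restrictList_of_subset (nbhd_subset _ _ _ _) hdN hd).symm.trans hN
  obtain ⟨E, hEcard, hE⟩ :=
    exists_card_eq_between_of_not_mem_nbhd hL.1 (hmemR c hc) (hmemR d hdC') hdN
  obtain ⟨v', hv', hSP, hWS⟩ := hdk
  suffices E.card ≤ k by omega
  refine card_le_of_singlePeaked_of_withinSwaps hv.1 (fun a ha => (hv'.2 a).2 ((hL.2 a).1 ha))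
    hSP hWS ((hL.2 c).2 (hC' hc)) ((hL.2 d).2 (hC' hdC')) fun e he => ?_
  obtain ⟨heN, hbetw⟩ := hE e he
  have heC' := nbhd_subset _ _ _ _ heN
  have hev : e ∈ v := (hv.2 e).2 (hC' heC')
  exact ⟨(hL.2 e).2 (hC' heC'),
    between_of_between_filter _ (hmemR c hc) (hmemR e heC') (hmemR d hdC') hbetw,
    (head?_restrictList_eq_some_iff_s4.1 hN).2.2 e heN hev hbetw.ne.1,
    (head?_restrictList_eq_some_iff_s4.1 hd).2.2 e heC' hev hbetw.ne.2⟩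

theorem dodgsonSP_kLocal_general
    (k : ℕ) (C : Finset α) (L : List α) (hL : IsVoteOn C L)
    (V : List (List α))
    (hV : ∀ v ∈ V, IsVoteOn C v ∧ DodgsonSP k C L v) :
    KLocal (k + 1) L C V := fun C' hC' c hc =>
  List.countP_congr fun v hv => by
    simpa using head?_restrictList_nbhd_eq_some_iff hL hC' hc (hV v hv).1 (hV v hv).2

/-- If every vote in `V` is Dodgson_k-SP w.r.t. the societal axis `L`,
then the plurality election `(C, V)` is `(k+1)`-local w.r.t. `L`. -/
theorem dodgsonSP_kLocal
    (k : ℕ) (hk : 1 ≤ k) (C : Finset α) (L : List α) (hL : IsVoteOn C L)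
    (V : List (List α))
    (hV : ∀ v ∈ V, IsVoteOn C v ∧ DodgsonSP k C L v) :
    KLocal (k + 1) L C V :=
  dodgsonSP_kLocal_general k C L hL V hV
end

section
/- Let C = {c_1, ..., c_m} be a finite candidate set with m ≥ 2 and let L be a linear order on C with c_1 L c_2 L ... L c_m. For every two distinct candidates c_i, c_j ∈ C there exist a linear order L' on C that is within m − 2 adjacent swaps of L and a linear-order vote v on C that ranks c_i first and c_j second and that is single-peaked with respect to L'. Moreover, if i ≠ 1 and j ≠ 1, then v can additionally be chosen to rank c_1 last. -/
variable {α : Type*} [DecidableEq α]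

/-! Slide `cj` along `L` until it is adjacent to `ci`. Only the candidates strictly between
them are passed, so this costs at most `m - 2` swaps and yields an axis `S ++ x :: y :: R` with
`{x, y} = {ci, cj}`. The vote `ci, cj, R, reverse S` starts at the peak and then ranks each arm
of this axis (`R` to the right, `S` to the left) outward from the peak, which is exactly
single-peakedness. Its last candidate is the head of `S`, which is the head `c₁` of `L` unless
`c₁ ∈ {ci, cj}`. -/

open List

theorem prefers_iff_pair_sublist {l : List α} {a b : α} (hl : l.Nodup) (ha : a ∈ l)
    (hb : b ∈ l) : Prefers l a b ↔ [a, b] <+ l := by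
  induction l with
  | nil => simp at ha
  | cons x t ih =>
    rw [nodup_cons] at hl
    unfold Prefers at ih ⊢
    by_cases hax : a = x <;> by_cases hbx : b = x
    · subst hax hbx
      simp [hl.1]
    · subst hax
      simp_all [idxOf_cons_ne _ (Ne.symm hbx)]
    · subst hbx
      simp only [idxOf_cons_self, Nat.not_lt_zero, false_iff, sublist_cons_iff]
      rintro (h | ⟨r, hr, -⟩)
      · exact hl.1 (h.subset (by simp))
      · exact hax (cons_eq_cons.mp hr).1
    · simp_all [idxOf_cons_ne _ (Ne.symm hax), idxOf_cons_ne _ (Ne.symm hbx), sublist_cons_iff]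

omit [DecidableEq α] in
theorem pair_sublist_of_mem_right {l₁ l₂ : List α} {a b : α} (hl : (l₁ ++ l₂).Nodup)
    (ha : a ∈ l₂) (hab : [a, b] <+ l₁ ++ l₂) : [a, b] <+ l₂ := by
  obtain ⟨_ | ⟨x, k₁⟩, k₂, e, h₁, h₂⟩ := sublist_append_iff.mp hab
  · rw [nil_append] at e
    exact e ▸ h₂
  · obtain ⟨rfl, -⟩ := cons_eq_cons.mp (e.trans (cons_append ..))
    exact absurd ha (disjoint_of_nodup_append hl (h₁.subset mem_cons_self))

theorem prefers_reverse_iff {l : List α} {a b : α} (hl : l.Nodup) (ha : a ∈ l) (hb : b ∈ l) :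
    Prefers l.reverse a b ↔ Prefers l b a := by
  rw [prefers_iff_pair_sublist (nodup_reverse.mpr hl) (mem_reverse.mpr ha) (mem_reverse.mpr hb),
    prefers_iff_pair_sublist hl hb ha, ← reverse_sublist, reverse_reverse]
  rfl

theorem Prefers.of_mem_right_of_sublist {l₁ l₂ v : List α} {a b : α} (hl : (l₁ ++ l₂).Nodup)
    (hv : v.Nodup) (hl₂ : l₂ <+ v) (ha : a ∈ l₂) (hb : b ∈ l₁ ++ l₂)
    (hab : Prefers (l₁ ++ l₂) a b) : Prefers v a b := by
  rw [prefers_iff_pair_sublist hl (mem_append_right l₁ ha) hb] at hab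
  have hv' := (pair_sublist_of_mem_right hl ha hab).trans hl₂
  exact (prefers_iff_pair_sublist hv (hv'.subset (by simp)) (hv'.subset (by simp))).mpr hv'

theorem singlePeaked_of_arms_sublist {S R v : List α} {c : α} (hL : (S ++ c :: R).Nodup)
    (hv : v.Nodup) (hright : c :: R <+ v) (hleft : c :: S.reverse <+ v) :
    SinglePeaked (S ++ c :: R) v := by
  have hrev : (S ++ c :: R).reverse = R.reverse ++ c :: S.reverse := by simp
  have right : ∀ a b, a ∈ c :: R → b ∈ S ++ c :: R →
      Prefers (S ++ c :: R) a b → Prefers v a b :=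
    fun a b ha hb => Prefers.of_mem_right_of_sublist hL hv hright ha hb
  have left : ∀ a b, a ∈ c :: S.reverse → b ∈ S ++ c :: R →
      Prefers (S ++ c :: R) b a → Prefers v a b := by
    intro a b ha hb hba
    have haL : a ∈ S ++ c :: R := by
      simp only [mem_append, mem_cons, mem_reverse] at ha ⊢
      tauto
    rw [← prefers_reverse_iff hL haL hb, hrev] at hba
    exact Prefers.of_mem_right_of_sublist (hrev ▸ nodup_reverse.mpr hL) hv hleft ha
      (hrev ▸ mem_reverse.mpr hb) hba
  have cover : ∀ x ∈ S ++ c :: R, x ∈ c :: R ∨ x ∈ c :: S.reverse := by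
    intro x hx
    simp only [mem_append, mem_cons, mem_reverse] at hx ⊢
    tauto
  -- If `c₂` lies on the arm of `c₃`, the vote descends from `c₂` to `c₃`; if it lies on the arm
  -- of `c₁`, the vote would rank `c₂` above `c₁`.
  rintro c₁ c₂ c₃ h₁ h₂ h₃ (⟨h₁₂, h₂₃⟩ | ⟨h₃₂, h₂₁⟩) hpref
  · rcases cover c₂ h₂ with hc₂ | hc₂
    · exact right c₂ c₃ hc₂ h₃ h₂₃
    · exact absurd hpref (lt_asymm (left c₂ c₁ hc₂ h₁ h₁₂))
  · rcases cover c₂ h₂ with hc₂ | hc₂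
    · exact absurd hpref (lt_asymm (right c₂ c₁ hc₂ h₁ h₂₁))
    · exact left c₂ c₃ hc₂ h₃ h₃₂

section Swaps

omit [DecidableEq α]

theorem AdjSwap.perm {l l' : List α} (h : AdjSwap l l') : l ~ l' := by
  obtain ⟨u, w, x, y, rfl, rfl⟩ := h
  exact (Perm.swap y x w).append_left u

theorem AdjSwap.append_left {l l' : List α} (P : List α) (h : AdjSwap l l') :
    AdjSwap (P ++ l) (P ++ l') := by
  obtain ⟨u, w, x, y, rfl, rfl⟩ := h
  exact ⟨P ++ u, w, x, y, by simp, by simp⟩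

theorem WithinSwaps.perm : ∀ {k : ℕ} {l l' : List α}, WithinSwaps k l l' → l ~ l'
  | 0, _, _, rfl => Perm.refl _
  | _ + 1, _, _, Or.inl rfl => Perm.refl _
  | _ + 1, _, _, Or.inr ⟨_, hs, hw⟩ => hs.perm.trans hw.perm

theorem WithinSwaps.mono : ∀ {k k' : ℕ} {l l' : List α}, k ≤ k' →
    WithinSwaps k l l' → WithinSwaps k' l l'
  | 0, 0, _, _, _, h => h
  | 0, _ + 1, _, _, _, h => Or.inl h
  | _ + 1, _ + 1, _, _, _, Or.inl h => Or.inl h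
  | _ + 1, _ + 1, _, _, hk, Or.inr ⟨l'', hs, hw⟩ =>
    Or.inr ⟨l'', hs, hw.mono (Nat.le_of_succ_le_succ hk)⟩

theorem WithinSwaps.append_left : ∀ {k : ℕ} {l l' : List α} (P : List α),
    WithinSwaps k l l' → WithinSwaps k (P ++ l) (P ++ l')
  | 0, _, _, _, rfl => rfl
  | _ + 1, _, _, _, Or.inl rfl => Or.inl rfl
  | _ + 1, _, _, P, Or.inr ⟨l'', hs, hw⟩ => Or.inr ⟨P ++ l'', hs.append_left P, hw.append_left P⟩

theorem withinSwaps_cons_append (y : α) (M Q : List α) :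
    WithinSwaps M.length (y :: (M ++ Q)) (M ++ y :: Q) := by
  induction M with
  | nil => rfl
  | cons q M ih =>
    exact Or.inr ⟨q :: y :: (M ++ Q), ⟨[], M ++ Q, y, q, rfl, rfl⟩, ih.append_left [q]⟩

theorem withinSwaps_append_cons (M : List α) (y : α) (Q : List α) :
    WithinSwaps M.length (M ++ y :: Q) (y :: (M ++ Q)) := by
  induction M using reverseRecOn generalizing Q with
  | nil => rfl
  | append_singleton M q ih =>
    rw [length_append, length_singleton]
    refine Or.inr ⟨M ++ y :: q :: Q, ⟨M, Q, q, y, by simp, by simp⟩, ?_⟩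
    simpa using ih (q :: Q)

theorem exists_withinSwaps_adjacent {L : List α} {a b : α} (ha : a ∈ L) (hb : b ∈ L)
    (hab : a ≠ b) :
    ∃ L' S R, WithinSwaps (L.length - 2) L L' ∧
      (L' = S ++ a :: b :: R ∨ L' = S ++ b :: a :: R) ∧
      ∀ c, L.head? = some c → a ≠ c → b ≠ c → S.head? = some c := by
  obtain ⟨P, T, rfl⟩ := append_of_mem ha
  rcases mem_append.mp hb with hbP | hbT
  · obtain ⟨P₁, P₂, rfl⟩ := append_of_mem hbP
    refine ⟨_, P₁ ++ P₂, T, ?_, Or.inr rfl, ?_⟩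
    · have h := (withinSwaps_cons_append b P₂ (a :: T)).append_left P₁
      simp only [append_assoc, cons_append] at h ⊢
      exact h.mono (by simp; omega)
    · intro c hc _ hbc
      cases P₁ with
      | nil => exact absurd (by simpa using hc) hbc
      | cons => simpa using hc
  · obtain ⟨M, Q, rfl⟩ := append_of_mem ((mem_cons.mp hbT).resolve_left hab.symm)
    refine ⟨_, P, M ++ Q, ?_, Or.inl rfl, ?_⟩
    · have h := (withinSwaps_append_cons M b Q).append_left (P ++ [a])
      simp only [append_assoc, cons_append] at h
      exact h.mono (by simp; omega)
    · intro c hc hac _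
      cases P with
      | nil => exact absurd (by simpa using hc) hac
      | cons => simpa using hc

end Swaps

section

omit [DecidableEq α]

theorem IsVoteOn.perm {C : Finset α} {l l' : List α} (h : IsVoteOn C l) (hp : l ~ l') :
    IsVoteOn C l' :=
  ⟨hp.nodup_iff.mp h.1, fun a => hp.mem_iff.symm.trans (h.2 a)⟩

theorem perm_cons_cons_append_reverse {L' S R : List α} {a b : α}
    (h : L' = S ++ a :: b :: R ∨ L' = S ++ b :: a :: R) : L' ~ a :: b :: (R ++ S.reverse) := by
  have hab : S ++ a :: b :: R ~ a :: b :: (R ++ S.reverse) :=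
    (perm_middle.trans (perm_middle.cons a)).trans
      (((perm_append_comm.trans ((reverse_perm S).symm.append_left R)).cons b).cons a)
  rcases h with rfl | rfl
  · exact hab
  · exact ((Perm.swap a b R).append_left S).trans hab

theorem getLast?_cons_cons_append_reverse {S R : List α} {a b c : α} (h : S.head? = some c) :
    (a :: b :: (R ++ S.reverse)).getLast? = some c := by
  cases S with
  | nil => simp at h
  | cons d S =>
    obtain rfl : d = c := by simpa using h
    rw [show a :: b :: (R ++ (d :: S).reverse) = a :: b :: (R ++ S.reverse) ++ [d] by simp]
    exact getLast?_concat ..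

end

theorem singlePeaked_cons_cons_append_reverse {L' S R : List α} {a b : α}
    (h : L' = S ++ a :: b :: R ∨ L' = S ++ b :: a :: R)
    (hv : (a :: b :: (R ++ S.reverse)).Nodup) : SinglePeaked L' (a :: b :: (R ++ S.reverse)) := by
  have hL' := (perm_cons_cons_append_reverse h).nodup_iff.mpr hv
  rcases h with rfl | rfl
  · exact singlePeaked_of_arms_sublist hL' hv (by simp) (by simp)
  · rw [show S ++ b :: a :: R = (S ++ [b]) ++ a :: R by simp] at hL' ⊢
    exact singlePeaked_of_arms_sublist hL' hv (by simp) (by simp)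

theorem IsVoteOn.card_eq_length {C : Finset α} {l : List α} (h : IsVoteOn C l) :
    C.card = l.length := by
  rw [← toFinset_card_of_nodup h.1]
  congr
  ext a
  simp [h.2 a]

theorem perceptionFlip_any_top_two_general
    (C : Finset α) (L : List α) (hL : IsVoteOn C L)
    (ci cj : α) (hci : ci ∈ C) (hcj : cj ∈ C) (hne : ci ≠ cj) :
    (∃ L' v, IsVoteOn C L' ∧ WithinSwaps (C.card - 2) L L' ∧
        IsVoteOn C v ∧ SinglePeaked L' v ∧
        v.head? = some ci ∧ v.tail.head? = some cj) ∧
    (∀ c1, L.head? = some c1 → ci ≠ c1 → cj ≠ c1 →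
      ∃ L' v, IsVoteOn C L' ∧ WithinSwaps (C.card - 2) L L' ∧
        IsVoteOn C v ∧ SinglePeaked L' v ∧
        v.head? = some ci ∧ v.tail.head? = some cj ∧ v.getLast? = some c1) := by
  obtain ⟨L', S, R, hswap, hshape, hhead⟩ :=
    exists_withinSwaps_adjacent ((hL.2 ci).2 hci) ((hL.2 cj).2 hcj) hne
  have hL' : IsVoteOn C L' := hL.perm hswap.perm
  have hv : IsVoteOn C (ci :: cj :: (R ++ S.reverse)) :=
    hL'.perm (perm_cons_cons_append_reverse hshape)
  have hsp := singlePeaked_cons_cons_append_reverse hshape hv.1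
  rw [hL.card_eq_length]
  exact ⟨⟨L', _, hL', hswap, hv, hsp, rfl, rfl⟩, fun c₁ hc₁ hi hj =>
    ⟨L', _, hL', hswap, hv, hsp, rfl, rfl,
      getLast?_cons_cons_append_reverse (hhead c₁ hc₁ hi hj)⟩⟩

/-- For every two distinct candidates `ci, cj` there are an axis `L'`
within `m - 2` adjacent swaps of `L` and a vote ranking `ci` first and `cj` second that
is single-peaked w.r.t. `L'`; moreover, if neither `ci` nor `cj` is the `L`-minimum
candidate `c1`, then the vote can additionally be chosen to rank `c1` last. -/
theorem perceptionFlip_any_top_two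
    (C : Finset α) (hC : 2 ≤ C.card) (L : List α) (hL : IsVoteOn C L)
    (ci cj : α) (hci : ci ∈ C) (hcj : cj ∈ C) (hne : ci ≠ cj) :
    (∃ L' v, IsVoteOn C L' ∧ WithinSwaps (C.card - 2) L L' ∧
        IsVoteOn C v ∧ SinglePeaked L' v ∧
        v.head? = some ci ∧ v.tail.head? = some cj) ∧
    (∀ c1, L.head? = some c1 → ci ≠ c1 → cj ≠ c1 →
      ∃ L' v, IsVoteOn C L' ∧ WithinSwaps (C.card - 2) L L' ∧
        IsVoteOn C v ∧ SinglePeaked L' v ∧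
        v.head? = some ci ∧ v.tail.head? = some cj ∧ v.getLast? = some c1) :=
  perceptionFlip_any_top_two_general C L hL ci cj hci hcj hne
end

section
/- Let k ≥ 0, let C be a finite candidate set with |C| ≥ k + 3, let L be a linear order on C, and let V be a finite collection of linear-order votes on C such that all but at most k of the votes are single-peaked with respect to L. Then there exists a candidate c ∈ C that is ranked last by no vote in V. -/
/-!
A single-peaked vote ranks one of the two extremes of the axis `L` last: any other candidate lies
strictly between them on `L`, and single-peakedness forbids ranking it below both. Hence every
vetoed candidate is an extreme of `L` or the last choice of one of the at most `k` mavericks, so at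
most `k + 2 < |C|` candidates are vetoed.
-/

variable {α : Type*} [DecidableEq α]

section

variable {l : List α} {a x : α}

theorem prefers_of_head?_eq (hx : l.head? = some x) (ha : a ∈ l) (hax : a ≠ x) :
    Prefers l x a := by
  obtain ⟨t, rfl⟩ := List.head?_eq_some_iff.1 hx
  simp [Prefers, hax.symm]

theorem prefers_of_getLast?_eq (hl : l.Nodup) (hx : l.getLast? = some x) (ha : a ∈ l)
    (hax : a ≠ x) : Prefers l a x := by
  obtain ⟨t, rfl⟩ := List.getLast?_eq_some_iff.1 hx
  have hat : a ∈ t := by simpa [hax] using ha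
  have hxt : x ∉ t := fun hxt => by simpa using (List.nodup_append.1 hl).2.2 x hxt
  simp only [Prefers, List.idxOf_append_of_mem hat, List.idxOf_append_of_notMem hxt]
  simpa using List.idxOf_lt_length_of_mem hat

end

theorem SinglePeaked.getLast?_eq_head?_or_getLast? {C : Finset α} {L v : List α}
    (hL : IsVoteOn C L) (hv : IsVoteOn C v) (hsp : SinglePeaked L v) :
    v.getLast? = L.head? ∨ v.getLast? = L.getLast? := by
  have hmem : ∀ a, a ∈ L ↔ a ∈ v := fun a => (hL.2 a).trans (hv.2 a).symm
  cases hlast : v.getLast? with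
  | none =>
    have hv : v = [] := List.getLast?_eq_none_iff.1 hlast
    have hL : L = [] :=
      List.eq_nil_iff_forall_not_mem.2 fun a ha => by simpa [hv] using (hmem a).1 ha
    simp [hL]
  | some x =>
    have hxL : x ∈ L := (hmem x).2 (List.mem_of_getLast? hlast)
    obtain ⟨h, hh⟩ : ∃ h, L.head? = some h :=
      ⟨_, List.head?_eq_some_head (List.ne_nil_of_mem hxL)⟩
    obtain ⟨t, ht⟩ : ∃ t, L.getLast? = some t :=
      ⟨_, List.getLast?_eq_some_getLast (List.ne_nil_of_mem hxL)⟩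
    by_contra! hne
    have hxh : x ≠ h := fun e => hne.1 (by rw [hh, e])
    have hxt : x ≠ t := fun e => hne.2 (by rw [ht, e])
    have hhL := List.mem_of_head? hh
    have htL := List.mem_of_getLast? ht
    have hbetween : Prefers L h x ∧ Prefers L x t :=
      ⟨prefers_of_head?_eq hh hxL hxh, prefers_of_getLast?_eq hL.1 ht hxL hxt⟩
    exact lt_asymm
      (hsp h x t hhL hxL htL (.inl hbetween)
        (prefers_of_getLast?_eq hv.1 hlast ((hmem h).1 hhL) hxh.symm))
      (prefers_of_getLast?_eq hv.1 hlast ((hmem t).1 htL) hxt.symm)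

/-- If `|C| ≥ k + 3` and all but at most `k` of the votes are
single-peaked w.r.t. `L`, then some candidate is ranked last (vetoed) by no vote. -/
theorem kMaverick_veto_unvetoed_candidate
    (k : ℕ) (C : Finset α) (hC : k + 3 ≤ C.card)
    (L : List α) (hL : IsVoteOn C L)
    {I : Type*} [Fintype I] (V : I → List α)
    (hvotes : ∀ i, IsVoteOn C (V i))
    (hmav : ∃ S : Finset I, S.card ≤ k ∧ ∀ i ∉ S, SinglePeaked L (V i)) :
    ∃ c ∈ C, ∀ i, (V i).getLast? ≠ some c := by
  obtain ⟨S, hScard, hSP⟩ := hmav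
  set lasts := Finset.univ.image fun i => (V i).getLast?
  have hsub : lasts ⊆ {L.head?, L.getLast?} ∪ S.image fun i => (V i).getLast? := by
    simp only [lasts, Finset.subset_iff, Finset.mem_image, Finset.mem_univ, true_and]
    rintro _ ⟨i, rfl⟩
    by_cases hi : i ∈ S
    · exact Finset.mem_union_right _ (Finset.mem_image_of_mem _ hi)
    · rcases (hSP i hi).getLast?_eq_head?_or_getLast? hL (hvotes i) with h | h <;> simp [h]
  have hcard : lasts.card < (C.map Function.Embedding.some).card := by
    calc lasts.card ≤ ({L.head?, L.getLast?} ∪ S.image fun i => (V i).getLast?).card :=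
          Finset.card_le_card hsub
      _ ≤ 2 + S.card := by
          grw [Finset.card_union_le, Finset.card_le_two, Finset.card_image_le]
      _ < (C.map Function.Embedding.some).card := by rw [Finset.card_map]; omega
  obtain ⟨_, hc, hunvetoed⟩ := Finset.exists_mem_notMem_of_card_lt_card hcard
  obtain ⟨c, hcC, rfl⟩ := Finset.mem_map.1 hc
  exact ⟨c, hcC, fun i hi => hunvetoed (Finset.mem_image.2 ⟨i, Finset.mem_univ i, hi⟩)⟩
end

section
/- Let C be a finite candidate set with p ∈ C, let I be a finite index set of voters, let V : I → (subsets of C) assign to each voter an approval ballot, and let S ⊆ I. If there exists an assignment W : I → (subsets of C) with W(i) = V(i) for all i ∉ S such that p is an approval winner of the election with ballots W, then p is an approval winner of the election with ballots W' where W'(i) = V(i) for i ∉ S and W'(i) = {p} for i ∈ S. (That is, bribing each bribed voter to approve of p and only p is an optimal bribe in approval voting.) -/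
variable {α : Type*} [DecidableEq α]

theorem approvalScore_le_approvalScore {I : Type*} [Fintype I] {W W' : I → Finset α} {c : α}
    (h : ∀ i, c ∈ W i → c ∈ W' i) : approvalScore W c ≤ approvalScore W' c :=
  Finset.card_le_card (Finset.monotone_filter_right _ fun i _ => h i)

theorem ApprovalWinner.mono {C : Finset α} {I : Type*} [Fintype I] {W W' : I → Finset α} {p : α}
    (hW : ApprovalWinner C W p) (hp : ∀ i, p ∈ W i → p ∈ W' i)
    (hc : ∀ i, ∀ c ∈ C, c ≠ p → c ∈ W' i → c ∈ W i) : ApprovalWinner C W' p := by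
  refine ⟨hW.1, fun c hcC => ?_⟩
  rcases eq_or_ne c p with rfl | hcp
  · exact le_rfl
  calc approvalScore W' c ≤ approvalScore W c := approvalScore_le_approvalScore (hc · c hcC hcp)
    _ ≤ approvalScore W p := hW.2 c hcC
    _ ≤ approvalScore W' p := approvalScore_le_approvalScore hp

theorem approval_bribe_to_only_p_optimal_general
    {I : Type*} [Fintype I] [DecidableEq I]
    (C : Finset α) (p : α)
    (V : I → Finset α) (S : Finset I)
    (h : ∃ W : I → Finset α, (∀ i, W i ⊆ C) ∧ (∀ i ∉ S, W i = V i) ∧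
      ApprovalWinner C W p) :
    ApprovalWinner C (fun i => if i ∈ S then {p} else V i) p := by
  obtain ⟨W, -, hWV, hW⟩ := h
  refine hW.mono (fun i hpi => ?_) (fun i c _ hcp hci => ?_)
  · by_cases hiS : i ∈ S
    · simp [hiS]
    · simpa [hiS, ← hWV i hiS] using hpi
  · by_cases hiS : i ∈ S
    · simp [hiS, hcp] at hci
    · simpa [hiS, hWV i hiS] using hci

/-- In approval voting, if the voters in `S` can be bribed (i.e., their
ballots arbitrarily changed) so that `p` becomes an approval winner, then bribing each
voter in `S` to approve of `p` and only `p` also makes `p` an approval winner. -/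
theorem approval_bribe_to_only_p_optimal
    {I : Type*} [Fintype I] [DecidableEq I]
    (C : Finset α) (p : α) (hp : p ∈ C)
    (V : I → Finset α) (hV : ∀ i, V i ⊆ C) (S : Finset I)
    (h : ∃ W : I → Finset α, (∀ i, W i ⊆ C) ∧ (∀ i ∉ S, W i = V i) ∧
      ApprovalWinner C W p) :
    ApprovalWinner C (fun i => if i ∈ S then {p} else V i) p :=
  approval_bribe_to_only_p_optimal_general C p V S h
end

section
/- Let α1 and α2 be integers with α1 > 2·α2 and α2 ≥ 1. Consider a weighted (α1, α2, 0) scoring election over three candidates a, p, b with societal axis a L p L b, in which every voter's linear-order vote is single-caved with respect to L, every voter has a positive integer weight, and the total weight W of all voters is positive. Then the score of the middle candidate p is strictly less than the maximum of the scores of a and b; in particular, p is not a winner. -/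
variable {α : Type*} [DecidableEq α]

/-! A single-caved vote never ranks the middle candidate `p` first, since preferring `p` to `a`
forces preferring `b` to `p`. So every voter gives `p` at most `α₂` points and gives `α₁` points
to `a` or `b`. Summing with weights, `2 · score p ≤ 2α₂W < α₁W ≤ score a + score b`. -/

theorem IsVoteOn.idxOf_eq_zero_of_three {a p b : α} {l : List α} (hl : IsVoteOn {a, p, b} l) :
    l.idxOf a = 0 ∨ l.idxOf p = 0 ∨ l.idxOf b = 0 := by
  obtain ⟨x, t, rfl⟩ := List.exists_cons_of_ne_nil (List.ne_nil_of_mem ((hl.2 a).2 (by simp)))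
  have hx : x ∈ ({a, p, b} : Finset α) := (hl.2 x).1 List.mem_cons_self
  simp only [Finset.mem_insert, Finset.mem_singleton] at hx
  rcases hx with rfl | rfl | rfl <;> simp

theorem SingleCaved.idxOf_middle_ne_zero {a p b : α} {l : List α} (hap : a ≠ p) (hpb : p ≠ b)
    (hab : a ≠ b) (ha : a ∈ l) (hc : SingleCaved [a, p, b] l) : l.idxOf p ≠ 0 := by
  intro hp
  have hpa : Prefers l p a := by
    have : l.idxOf a ≠ l.idxOf p := fun h => hap ((List.idxOf_inj ha).1 h)
    unfold Prefers
    omega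
  have hbp : Prefers l b p := hc a p b (by simp) (by simp) (by simp)
    (Or.inl ⟨by simp [Prefers, hap], by simp [Prefers, hap, hpb, hab]⟩) hpa
  unfold Prefers at hbp
  omega

theorem score3_le_of_idxOf_ne_zero (a1 a2 : ℕ) {l : List α} {c : α} (h : l.idxOf c ≠ 0) :
    score3 a1 a2 l c ≤ a2 := by
  unfold score3
  split_ifs <;> omega

theorem le_score3_add_score3 (a1 a2 : ℕ) {l : List α} {a b : α}
    (h : l.idxOf a = 0 ∨ l.idxOf b = 0) : a1 ≤ score3 a1 a2 l a + score3 a1 a2 l b := by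
  unfold score3
  split_ifs <;> omega

theorem two_mul_weighted_score3_middle_lt (a1 a2 : ℕ) (h1 : 2 * a2 < a1)
    {a p b : α} (hap : a ≠ p) (hpb : p ≠ b) (hab : a ≠ b)
    {I : Type*} [Fintype I] (w : I → ℕ) (V : I → List α)
    (hV : ∀ i, IsVoteOn {a, p, b} (V i) ∧ SingleCaved [a, p, b] (V i))
    (hW : 0 < ∑ i, w i) :
    2 * ∑ i, w i * score3 a1 a2 (V i) p <
      (∑ i, w i * score3 a1 a2 (V i) a) + ∑ i, w i * score3 a1 a2 (V i) b := by
  have hp_top (i : I) : (V i).idxOf p ≠ 0 :=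
    (hV i).2.idxOf_middle_ne_zero hap hpb hab (((hV i).1.2 a).2 (by simp))
  have hend_top (i : I) : (V i).idxOf a = 0 ∨ (V i).idxOf b = 0 := by
    rcases (hV i).1.idxOf_eq_zero_of_three with h | h | h
    · exact .inl h
    · exact absurd h (hp_top i)
    · exact .inr h
  calc 2 * ∑ i, w i * score3 a1 a2 (V i) p
      ≤ 2 * ∑ i, w i * a2 := by
        gcongr with i
        exact score3_le_of_idxOf_ne_zero a1 a2 (hp_top i)
    _ = (∑ i, w i) * (2 * a2) := by rw [← Finset.sum_mul]; ring
    _ < (∑ i, w i) * a1 := Nat.mul_lt_mul_of_pos_left h1 hW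
    _ = ∑ i, w i * a1 := Finset.sum_mul ..
    _ ≤ ∑ i, w i * (score3 a1 a2 (V i) a + score3 a1 a2 (V i) b) := by
        gcongr with i
        exact le_score3_add_score3 a1 a2 (hend_top i)
    _ = _ := by simp only [mul_add, Finset.sum_add_distrib]

theorem singleCaved_middle_loses_general
    (a1 a2 : ℕ) (h1 : 2 * a2 < a1)
    (a p b : α) (hap : a ≠ p) (hpb : p ≠ b) (hab : a ≠ b)
    {I : Type*} [Fintype I] (w : I → ℕ)
    (V : I → List α)
    (hV : ∀ i, IsVoteOn {a, p, b} (V i) ∧ SingleCaved [a, p, b] (V i))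
    (hW : 0 < ∑ i, w i) :
    (∑ i, w i * score3 a1 a2 (V i) p) <
      max (∑ i, w i * score3 a1 a2 (V i) a) (∑ i, w i * score3 a1 a2 (V i) b) ∧
    ¬ (∀ c ∈ ({a, p, b} : Finset α),
        (∑ i, w i * score3 a1 a2 (V i) c) ≤ ∑ i, w i * score3 a1 a2 (V i) p) := by
  have key := two_mul_weighted_score3_middle_lt a1 a2 h1 hap hpb hab w V hV hW
  have hlt : (∑ i, w i * score3 a1 a2 (V i) p) <
      max (∑ i, w i * score3 a1 a2 (V i) a) (∑ i, w i * score3 a1 a2 (V i) b) := by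
    omega
  refine ⟨hlt, fun hwin => ?_⟩
  have ha := hwin a (by simp)
  have hb := hwin b (by simp)
  omega

/-- In a weighted `(a1, a2, 0)` scoring election with `a1 > 2·a2`,
`a2 ≥ 1`, over three candidates with axis `a L p L b`, all votes single-caved w.r.t.
`L`, all weights positive, and positive total weight, the middle candidate `p` scores
strictly less than the better of `a` and `b`; in particular `p` is not a winner. -/
theorem singleCaved_middle_loses
    (a1 a2 : ℕ) (h1 : 2 * a2 < a1) (h2 : 1 ≤ a2)
    (a p b : α) (hap : a ≠ p) (hpb : p ≠ b) (hab : a ≠ b)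
    {I : Type*} [Fintype I] (w : I → ℕ) (hw : ∀ i, 0 < w i)
    (V : I → List α)
    (hV : ∀ i, IsVoteOn {a, p, b} (V i) ∧ SingleCaved [a, p, b] (V i))
    (hW : 0 < ∑ i, w i) :
    (∑ i, w i * score3 a1 a2 (V i) p) <
      max (∑ i, w i * score3 a1 a2 (V i) a) (∑ i, w i * score3 a1 a2 (V i) b) ∧
    ¬ (∀ c ∈ ({a, p, b} : Finset α),
        (∑ i, w i * score3 a1 a2 (V i) c) ≤ ∑ i, w i * score3 a1 a2 (V i) p) :=
  singleCaved_middle_loses_general a1 a2 h1 a p b hap hpb hab w V hV hW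
end

section
/- Let α1 ≥ α2 ≥ 1 be integers, let n ≥ 1, and let k_1, ..., k_n be distinct positive integers with k_1 + ... + k_n = 2K for a positive integer K. Consider the weighted (α1, α2, 0) scoring election over candidates {p, a, b} whose voters are: one fixed voter with preference order a > b > p and weight (2α1 − α2)·α1·K; one fixed voter with preference order b > p > a and nonnegative weight (2α1 − α2)·(α1 − α2)·K; and n manipulators, where manipulator i has weight (α1² − α1·α2 + α2²)·k_i and may cast any linear order on {p, a, b}. Then there exists a choice of the manipulators' preference orders under which p is a winner (p's score is at least the score of a and at least the score of b) if and only if there exists a subset S ⊆ {1, ..., n} with Σ_{i∈S} k_i = K. -/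
variable {α : Type*} [DecidableEq α]

/-!
The two fixed voters put `a` and `b` each exactly `M·(2α1 - α2)·K` points ahead of `p`, where
`M = α1² - α1α2 + α2²` is the weight unit of the manipulators. After dividing by `M`, the
manipulators, who hand out `(α1 + α2)·2K` units in total, must give `p` at least `(2α1 - α2)·K`
more units than each of `a` and `b`. As `p` can receive at most `2α1K` units, this forces `p` to
get exactly `2α1K` (every manipulator of positive weight gives `p` the full `α1` points) and `a`
and `b` to get exactly `α2K` units each; the manipulators giving points to `a` then carry total
weight `K`. Conversely, a subset of weight `K` voting `p > a > b` and the rest voting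
`p > b > a` tie all three candidates.
-/
theorem score3_first (a1 a2 : ℕ) (x y z : α) : score3 a1 a2 [x, y, z] x = a1 := by
  simp [score3]

theorem score3_second (a1 a2 : ℕ) {x y : α} (z : α) (hxy : x ≠ y) :
    score3 a1 a2 [x, y, z] y = a2 := by
  simp [score3, hxy]

theorem score3_third (a1 a2 : ℕ) {x y z : α} (hxz : x ≠ z) (hyz : y ≠ z) :
    score3 a1 a2 [x, y, z] z = 0 := by
  simp [score3, hxz, hyz]

theorem score3_le {a1 a2 : ℕ} (h : a2 ≤ a1) (v : List α) (c : α) :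
    score3 a1 a2 v c ≤ a1 := by
  unfold score3; split_ifs <;> omega

section ThreeCandidates

variable {p a b : α} {v : List α}

theorem IsVoteOn.eq_or_of_three (hpa : p ≠ a) (hpb : p ≠ b) (hab : a ≠ b)
    (hv : IsVoteOn {p, a, b} v) :
    v = [p, a, b] ∨ v = [p, b, a] ∨ v = [a, p, b] ∨ v = [a, b, p] ∨ v = [b, p, a] ∨
      v = [b, a, p] := by
  have hperm : v.Perm [p, a, b] := by
    rw [List.perm_ext_iff_of_nodup hv.1 (by simp [hpa, hpb, hab])]
    intro c
    simp [hv.2 c]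
  have := List.mem_permutations.2 hperm
  simp only [List.permutations, List.permutationsAux, List.permutationsAux.rec] at this
  simp at this
  tauto

theorem IsVoteOn.score3_add_add (hpa : p ≠ a) (hpb : p ≠ b) (hab : a ≠ b)
    (hv : IsVoteOn {p, a, b} v) (a1 a2 : ℕ) :
    score3 a1 a2 v p + score3 a1 a2 v a + score3 a1 a2 v b = a1 + a2 := by
  rcases hv.eq_or_of_three hpa hpb hab with rfl | rfl | rfl | rfl | rfl | rfl <;>
    simp [score3, hpa, hpb, hab, hpa.symm, hpb.symm, hab.symm] <;> omega

theorem IsVoteOn.score3_eq_zero_or_eq (hpa : p ≠ a) (hpb : p ≠ b) (hab : a ≠ b)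
    (hv : IsVoteOn {p, a, b} v) {a1 a2 : ℕ} (hp : score3 a1 a2 v p = a1) :
    score3 a1 a2 v a = 0 ∨ score3 a1 a2 v a = a2 := by
  rcases hv.eq_or_of_three hpa hpb hab with rfl | rfl | rfl | rfl | rfl | rfl <;>
    simp [score3, hpa, hpa.symm, hpb.symm, hab.symm] at hp ⊢ <;> omega

end ThreeCandidates

theorem two_mul_sub_mul_add_mul {a1 a2 : ℕ} (h12 : a2 ≤ a1) (K : ℕ) :
    (2 * a1 - a2) * K + a2 * K = 2 * (a1 * K) := by
  rw [← add_mul, Nat.sub_add_cancel (by omega), mul_assoc]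

def weightedScore3 {ι : Type*} [Fintype ι] (a1 a2 : ℕ) (w : ι → ℕ) (σ : ι → List α)
    (c : α) : ℕ :=
  ∑ i, w i * score3 a1 a2 (σ i) c

section Weighted

variable {ι : Type*} [Fintype ι] {a1 a2 : ℕ} (w : ι → ℕ) {σ : ι → List α} {p a b : α}

theorem sum_mul_mul_score3 (m : ℕ) (σ : ι → List α) (c : α) :
    ∑ i, m * w i * score3 a1 a2 (σ i) c = m * weightedScore3 a1 a2 w σ c := by
  simp only [weightedScore3, Finset.mul_sum, mul_assoc]

theorem weightedScore3_le (h12 : a2 ≤ a1) (σ : ι → List α) (c : α) :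
    weightedScore3 a1 a2 w σ c ≤ a1 * ∑ i, w i := by
  rw [Finset.mul_sum]
  exact Finset.sum_le_sum fun i _ => (Nat.mul_le_mul_left _ (score3_le h12 _ c)).trans_eq
    (mul_comm _ _)

theorem weightedScore3_add_add (hpa : p ≠ a) (hpb : p ≠ b) (hab : a ≠ b)
    (hσ : ∀ i, IsVoteOn {p, a, b} (σ i)) :
    weightedScore3 a1 a2 w σ p + weightedScore3 a1 a2 w σ a + weightedScore3 a1 a2 w σ b =
      (a1 + a2) * ∑ i, w i := by
  simp only [weightedScore3, ← Finset.sum_add_distrib, ← mul_add,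
    (hσ _).score3_add_add hpa hpb hab, Finset.sum_mul, mul_comm]

theorem weightedScore3_ite [DecidableEq ι] (S : Finset ι) (u v : List α) (c : α) :
    weightedScore3 a1 a2 w (fun i => if i ∈ S then u else v) c =
      score3 a1 a2 u c * ∑ i ∈ S, w i + score3 a1 a2 v c * ∑ i ∈ Sᶜ, w i := by
  rw [weightedScore3, ← Finset.sum_add_sum_compl S, Finset.mul_sum, Finset.mul_sum]
  congr 1 <;> refine Finset.sum_congr rfl fun i hi => ?_
  · rw [if_pos hi, mul_comm]
  · rw [if_neg (Finset.mem_compl.1 hi), mul_comm]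

theorem weightedScore3_eq_mul_sum_filter (h12 : a2 ≤ a1) (hpa : p ≠ a) (hpb : p ≠ b)
    (hab : a ≠ b) (hσ : ∀ i, IsVoteOn {p, a, b} (σ i))
    (hp : weightedScore3 a1 a2 w σ p = a1 * ∑ i, w i) :
    weightedScore3 a1 a2 w σ a =
      a2 * ∑ i ∈ Finset.univ.filter (fun i => score3 a1 a2 (σ i) a ≠ 0), w i := by
  have hpi : ∀ i, w i * score3 a1 a2 (σ i) p = w i * a1 := by
    have hle : ∀ i ∈ Finset.univ, w i * score3 a1 a2 (σ i) p ≤ w i * a1 :=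
      fun i _ => Nat.mul_le_mul_left _ (score3_le h12 _ p)
    rw [weightedScore3, Finset.mul_sum] at hp
    simp_rw [mul_comm a1] at hp
    exact fun i => (Finset.sum_eq_sum_iff_of_le hle).1 hp i (Finset.mem_univ i)
  rw [Finset.sum_filter, Finset.mul_sum, weightedScore3]
  refine Finset.sum_congr rfl fun i _ => ?_
  split_ifs with ha
  · rcases Nat.eq_zero_or_pos (w i) with hw | hw
    · simp [hw]
    · have := (hσ i).score3_eq_zero_or_eq hpa hpb hab (Nat.eq_of_mul_eq_mul_left hw (hpi i))
      rw [this.resolve_left ha, mul_comm]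
  · rw [not_not.1 ha, mul_zero, mul_zero]

theorem exists_sum_eq_of_le_weightedScore3 (h12 : a2 ≤ a1) (h2 : 0 < a2) (hpa : p ≠ a)
    (hpb : p ≠ b) (hab : a ≠ b) (hσ : ∀ i, IsVoteOn {p, a, b} (σ i)) {K : ℕ}
    (hsum : ∑ i, w i = 2 * K)
    (ha : (2 * a1 - a2) * K + weightedScore3 a1 a2 w σ a ≤ weightedScore3 a1 a2 w σ p)
    (hb : (2 * a1 - a2) * K + weightedScore3 a1 a2 w σ b ≤ weightedScore3 a1 a2 w σ p) :
    ∃ S : Finset ι, ∑ i ∈ S, w i = K := by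
  have htot := weightedScore3_add_add (a1 := a1) (a2 := a2) w hpa hpb hab hσ
  have hle := weightedScore3_le w h12 σ p
  have hgap := two_mul_sub_mul_add_mul h12 K
  rw [hsum] at htot hle
  have hp : weightedScore3 a1 a2 w σ p = a1 * ∑ i, w i := by rw [hsum]; linarith
  have hSa : weightedScore3 a1 a2 w σ a = a2 * K := by linarith
  refine ⟨Finset.univ.filter (fun i => score3 a1 a2 (σ i) a ≠ 0),
    Nat.eq_of_mul_eq_mul_left h2 ?_⟩
  rw [← weightedScore3_eq_mul_sum_filter w h12 hpa hpb hab hσ hp, hSa]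

end Weighted

section FixedVoters

variable {a1 a2 : ℕ}

theorem fixedScore_a_eq (h12 : a2 ≤ a1) (K : ℕ) :
    (2 * a1 - a2) * a1 * K * a1 =
      (2 * a1 - a2) * (a1 - a2) * K * a2 +
        (a1 * a1 - a1 * a2 + a2 * a2) * ((2 * a1 - a2) * K) := by
  have : a1 * a2 ≤ a1 * a1 := Nat.mul_le_mul_left a1 h12
  zify [h12, this, (by omega : a2 ≤ 2 * a1)]
  ring

theorem fixedScore_b_eq (h12 : a2 ≤ a1) (K : ℕ) :
    (2 * a1 - a2) * a1 * K * a2 + (2 * a1 - a2) * (a1 - a2) * K * a1 =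
      (2 * a1 - a2) * (a1 - a2) * K * a2 +
        (a1 * a1 - a1 * a2 + a2 * a2) * ((2 * a1 - a2) * K) := by
  have : a1 * a2 ≤ a1 * a1 := Nat.mul_le_mul_left a1 h12
  zify [h12, this, (by omega : a2 ≤ 2 * a1)]
  ring

end FixedVoters

theorem oneMaverick_scoring_manipulation_iff_partition_general
    (a1 a2 : ℕ) (h12 : a2 ≤ a1) (h2 : 1 ≤ a2)
    (p a b : α) (hpa : p ≠ a) (hpb : p ≠ b) (hab : a ≠ b)
    (n : ℕ) (kk : Fin n → ℕ) (K : ℕ) (hsum : ∑ i, kk i = 2 * K) :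
    (∃ σ : Fin n → List α, (∀ i, IsVoteOn {p, a, b} (σ i)) ∧
      (let sc : α → ℕ := fun c =>
        (2 * a1 - a2) * a1 * K * score3 a1 a2 [a, b, p] c
          + (2 * a1 - a2) * (a1 - a2) * K * score3 a1 a2 [b, p, a] c
          + ∑ i, (a1 * a1 - a1 * a2 + a2 * a2) * kk i * score3 a1 a2 (σ i) c
       sc a ≤ sc p ∧ sc b ≤ sc p))
    ↔ ∃ S : Finset (Fin n), ∑ i ∈ S, kk i = K := by
  have hM : 0 < a1 * a1 - a1 * a2 + a2 * a2 := Nat.lt_add_left _ (Nat.mul_pos h2 h2)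
  simp only [sum_mul_mul_score3, score3_first, score3_second _ _ _ hab,
    score3_second _ _ _ hpb.symm, score3_third _ _ hpa.symm hpb.symm,
    score3_third _ _ hab.symm hpa, mul_zero, add_zero, zero_add, fixedScore_a_eq h12,
    fixedScore_b_eq h12, add_assoc, add_le_add_iff_left, ← mul_add,
    Nat.mul_le_mul_left_iff hM]
  constructor
  · rintro ⟨σ, hσ, ha, hb⟩
    exact exists_sum_eq_of_le_weightedScore3 kk h12 h2 hpa hpb hab hσ hsum ha hb
  · rintro ⟨S, hS⟩
    refine ⟨fun i => if i ∈ S then [p, a, b] else [p, b, a], fun i => ?_, ?_⟩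
    · dsimp only
      split_ifs
      · exact ⟨by simp [hpa, hpb, hab], fun c => by simp⟩
      · exact ⟨by simp [hpa, hpb, hab.symm], fun c => by simp; tauto⟩
    have hSc : ∑ i ∈ Sᶜ, kk i = K := by
      have := Finset.sum_add_sum_compl S kk
      omega
    simp only [weightedScore3_ite, score3_first, score3_second _ _ _ hpa, score3_second _ _ _ hpb,
      score3_third _ _ hpa hab.symm, score3_third _ _ hpb hab, hS, hSc]
    have := two_mul_sub_mul_add_mul h12 K
    constructor <;> linarith

/-- One-maverick manipulation of `(a1, a2, 0)` scoring elections encodes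
PARTITION: with the two fixed voters `a > b > p` of weight `(2a1 - a2)·a1·K` and
`b > p > a` of weight `(2a1 - a2)·(a1 - a2)·K`, and manipulators of weights
`(a1² - a1·a2 + a2²)·k_i`, the manipulators can make `p` a winner iff some subset of
the `k_i` sums to `K`. -/
theorem oneMaverick_scoring_manipulation_iff_partition
    (a1 a2 : ℕ) (h12 : a2 ≤ a1) (h2 : 1 ≤ a2)
    (p a b : α) (hpa : p ≠ a) (hpb : p ≠ b) (hab : a ≠ b)
    (n : ℕ) (hn : 1 ≤ n) (kk : Fin n → ℕ) (hinj : Function.Injective kk)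
    (hpos : ∀ i, 0 < kk i) (K : ℕ) (hK : 0 < K) (hsum : ∑ i, kk i = 2 * K) :
    (∃ σ : Fin n → List α, (∀ i, IsVoteOn {p, a, b} (σ i)) ∧
      (let sc : α → ℕ := fun c =>
        (2 * a1 - a2) * a1 * K * score3 a1 a2 [a, b, p] c
          + (2 * a1 - a2) * (a1 - a2) * K * score3 a1 a2 [b, p, a] c
          + ∑ i, (a1 * a1 - a1 * a2 + a2 * a2) * kk i * score3 a1 a2 (σ i) c
       sc a ≤ sc p ∧ sc b ≤ sc p))
    ↔ ∃ S : Finset (Fin n), ∑ i ∈ S, kk i = K :=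
  oneMaverick_scoring_manipulation_iff_partition_general a1 a2 h12 h2 p a b hpa hpb hab n kk K hsum
end

section
/- Let m ≥ 3, let C = {p, c_1, ..., c_{m−3}, a, b} be a set of m candidates, let n ≥ 1, and let k_1, ..., k_n be distinct positive integers with k_1 + ... + k_n = 2K for a positive integer K. Consider the weighted veto election over C whose voters are: for each candidate c ∈ C − {a, b}, one fixed voter of weight K who ranks c last; and n manipulators, where manipulator i has weight k_i and may cast any linear order on C. Then there exists a choice of the manipulators' preference orders under which p is a winner (no candidate has veto score strictly greater than p's) if and only if there exists a subset S ⊆ {1, ..., n} with Σ_{i∈S} k_i = K. -/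
variable {α : Type*} [DecidableEq α]

open Finset

/-! The fixed voters give every candidate of `C \ {a, b}` the same score, `K` less than the score
of `a` and of `b`. For `p` to win, the manipulators must therefore veto `a` with weight at least `K`
and `b` with weight at least `K`; as their total weight is `2K`, those vetoing `a` weigh exactly `K`.
Conversely, if `S` weighs `K`, let the manipulators in `S` veto `a` and the others veto `b`: then
all candidates tie. -/

theorem vetoInd_of_getLast? {v : List α} {d : α} (h : v.getLast? = some d) (c : α) :
    vetoInd v c = if d = c then 0 else 1 := by
  simp [vetoInd, h]

theorem sum_mul_vetoInd_of_getLast? (D : Finset α) (F : α → List α) (w : ℕ)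
    (hF : ∀ d ∈ D, (F d).getLast? = some d) (c : α) :
    ∑ d ∈ D, w * vetoInd (F d) c = w * #(D.erase c) := by
  rw [sum_congr rfl fun d hd => by rw [vetoInd_of_getLast? (hF d hd), mul_ite, mul_zero, mul_one],
    sum_ite, sum_const_zero, zero_add, sum_const, smul_eq_mul, mul_comm, filter_ne']

section Weighted

variable {ι : Type*} [Fintype ι]

def vetoWeight (w : ι → ℕ) (σ : ι → List α) (c : α) : ℕ :=
  ∑ i with (σ i).getLast? = some c, w i

theorem sum_mul_vetoInd_add_vetoWeight (w : ι → ℕ) (σ : ι → List α) (c : α) :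
    ∑ i, w i * vetoInd (σ i) c + vetoWeight w σ c = ∑ i, w i := by
  simp only [vetoInd, vetoWeight, mul_ite, mul_zero, mul_one, sum_ite, sum_const_zero, zero_add]
  exact sum_filter_not_add_sum_filter _ _ _

theorem vetoWeight_add_vetoWeight_le (w : ι → ℕ) (σ : ι → List α) {c d : α} (hcd : c ≠ d) :
    vetoWeight w σ c + vetoWeight w σ d ≤ ∑ i, w i := by
  calc vetoWeight w σ c + vetoWeight w σ d
      ≤ (∑ i with (σ i).getLast? = some c, w i) + ∑ i with (σ i).getLast? ≠ some c, w i := by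
        refine add_le_add le_rfl (sum_le_sum_of_subset fun i => ?_)
        simp only [mem_filter, mem_univ, true_and]
        exact fun hd hc => hcd (Option.some.inj (hc.symm.trans hd))
    _ = ∑ i, w i := sum_filter_add_sum_filter_not _ _ _

theorem sum_mul_vetoInd_ite [DecidableEq ι] (S : Finset ι) (w : ι → ℕ) (u v : List α) (c : α) :
    ∑ i, w i * vetoInd (if i ∈ S then u else v) c
      = (∑ i ∈ S, w i) * vetoInd u c + (∑ i ∈ Sᶜ, w i) * vetoInd v c := by
  simp only [apply_ite (fun l => vetoInd l c), mul_ite, sum_ite, filter_mem_eq_inter, univ_inter,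
    sum_mul]
  congr 2
  ext i; simp

end Weighted

noncomputable def vetoLast (C : Finset α) (x : α) : List α :=
  C.toList.erase x ++ [x]

theorem isVoteOn_vetoLast {C : Finset α} {x : α} (hx : x ∈ C) : IsVoteOn C (vetoLast C x) := by
  have hperm : (vetoLast C x).Perm C.toList :=
    (List.perm_append_singleton x _).trans (List.perm_cons_erase (mem_toList.2 hx)).symm
  exact ⟨hperm.nodup_iff.2 C.nodup_toList, fun y => hperm.mem_iff.trans mem_toList⟩

theorem getLast?_vetoLast (C : Finset α) (x : α) : (vetoLast C x).getLast? = some x :=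
  List.getLast?_concat

theorem card_erase_eq_card_erase_add_one {D : Finset α} {p x : α} (hp : p ∈ D) (hx : x ∉ D) :
    #(D.erase x) = #(D.erase p) + 1 := by
  rw [erase_eq_of_notMem hx, card_erase_add_one hp]

theorem card_erase_eq_card_erase {D : Finset α} {p x : α} (hp : p ∈ D) (hx : x ∈ D) :
    #(D.erase x) = #(D.erase p) := by
  rw [card_erase_of_mem hx, card_erase_of_mem hp]

theorem veto_manipulation_iff_partition_general
    (C : Finset α)
    (p a b : α) (hp : p ∈ C) (ha : a ∈ C) (hb : b ∈ C)
    (hpa : p ≠ a) (hpb : p ≠ b) (hab : a ≠ b)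
    (F : α → List α)
    (hF : ∀ c ∈ C \ {a, b}, IsVoteOn C (F c) ∧ (F c).getLast? = some c)
    (n : ℕ) (kk : Fin n → ℕ) (K : ℕ) (hsum : ∑ i, kk i = 2 * K) :
    (∃ σ : Fin n → List α, (∀ i, IsVoteOn C (σ i)) ∧
      (let sc : α → ℕ := fun c =>
        (∑ d ∈ C \ {a, b}, K * vetoInd (F d) c) + ∑ i, kk i * vetoInd (σ i) c
       ∀ c ∈ C, sc c ≤ sc p))
    ↔ ∃ S : Finset (Fin n), ∑ i ∈ S, kk i = K := by
  set D := C \ {a, b}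
  have hpD : p ∈ D := by simp [D, hp, hpa, hpb]
  have haD : #(D.erase a) = #(D.erase p) + 1 := card_erase_eq_card_erase_add_one hpD (by simp [D])
  have hbD : #(D.erase b) = #(D.erase p) + 1 := card_erase_eq_card_erase_add_one hpD (by simp [D])
  simp only [sum_mul_vetoInd_of_getLast? D F K fun d hd => (hF d hd).2]
  constructor
  · rintro ⟨σ, -, hwin⟩
    have hwa := hwin a ha
    have hwb := hwin b hb
    have hσa := sum_mul_vetoInd_add_vetoWeight kk σ a
    have hσb := sum_mul_vetoInd_add_vetoWeight kk σ b
    have hσp := sum_mul_vetoInd_add_vetoWeight kk σ p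
    have hveto := vetoWeight_add_vetoWeight_le kk σ hab
    rw [haD, mul_add] at hwa
    rw [hbD, mul_add] at hwb
    exact ⟨_, show vetoWeight kk σ a = K by omega⟩
  · rintro ⟨S, hS⟩
    have hSc : ∑ i ∈ Sᶜ, kk i = K := by
      have := sum_add_sum_compl S kk
      omega
    refine ⟨fun i => if i ∈ S then vetoLast C a else vetoLast C b,
      fun i => by dsimp only; split_ifs; exacts [isVoteOn_vetoLast ha, isVoteOn_vetoLast hb], ?_⟩
    intro c hc
    simp only [sum_mul_vetoInd_ite, hS, hSc, vetoInd_of_getLast? (getLast?_vetoLast C _),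
      if_neg hpa.symm, if_neg hpb.symm]
    by_cases hca : c = a
    · subst hca
      simp only [haD, if_pos, if_neg hab.symm, mul_add]
      omega
    by_cases hcb : c = b
    · subst hcb
      simp only [hbD, if_pos, if_neg hab, mul_add]
      omega
    rw [card_erase_eq_card_erase hpD (by simp [D, hc, hca, hcb]), if_neg (Ne.symm hca),
      if_neg (Ne.symm hcb)]

/-- Manipulation of weighted veto elections with the fixed voters being,
for each candidate `c ∈ C - {a, b}`, one weight-`K` voter ranking `c` last, encodes
PARTITION: manipulators with weights `k_1, ..., k_n` can make `p` a winner iff some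
subset of the `k_i` sums to `K`. -/
theorem veto_manipulation_iff_partition
    (C : Finset α) (hm : 3 ≤ C.card)
    (p a b : α) (hp : p ∈ C) (ha : a ∈ C) (hb : b ∈ C)
    (hpa : p ≠ a) (hpb : p ≠ b) (hab : a ≠ b)
    (F : α → List α)
    (hF : ∀ c ∈ C \ {a, b}, IsVoteOn C (F c) ∧ (F c).getLast? = some c)
    (n : ℕ) (hn : 1 ≤ n) (kk : Fin n → ℕ) (hinj : Function.Injective kk)
    (hpos : ∀ i, 0 < kk i) (K : ℕ) (hK : 0 < K) (hsum : ∑ i, kk i = 2 * K) :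
    (∃ σ : Fin n → List α, (∀ i, IsVoteOn C (σ i)) ∧
      (let sc : α → ℕ := fun c =>
        (∑ d ∈ C \ {a, b}, K * vetoInd (F d) c) + ∑ i, kk i * vetoInd (σ i) c
       ∀ c ∈ C, sc c ≤ sc p))
    ↔ ∃ S : Finset (Fin n), ∑ i ∈ S, kk i = K :=
  veto_manipulation_iff_partition_general C p a b hp ha hb hpa hpb hab F hF n kk K hsum
end

section
/- Let C = {c_1, ..., c_m} with m ≥ 2 be a finite candidate set, let L be a linear order on C with c_1 L c_2 L ... L c_m, and let V be a finite collection of linear-order votes on C, each single-peaked with respect to L. Then in plurality voting: (1) the plurality score of c_1 in (C, V) equals the plurality score of c_1 in ({c_1, c_2}, V); (2) for each i with 2 ≤ i ≤ m − 1, the plurality score of c_i in (C, V) equals the plurality score of c_i in ({c_{i−1}, c_i, c_{i+1}}, V); and (3) the plurality score of c_m in (C, V) equals the plurality score of c_m in ({c_{m−1}, c_m}, V). -/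
variable {α : Type*} [DecidableEq α]

/-!
In a single-peaked vote with top choice `t`, every candidate lying strictly between `t` and `c`
on the axis is preferred to `c`. Hence if every candidate outside `S` is separated from `c` on the
axis by a member of `S`, the vote ranks `c` first among `S` exactly when it ranks `c` first
overall. The axis neighbours of `c_i`, together with `c_i`, form such a set `S`.
-/

/-- Definitionally the betweenness hypothesis of `SinglePeaked`. -/
def StrictlyBetween (L : List α) (a b c : α) : Prop :=
  (Prefers L a b ∧ Prefers L b c) ∨ (Prefers L c b ∧ Prefers L b a)

theorem Prefers.mem_left {l : List α} {a b : α} (h : Prefers l a b) : a ∈ l :=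
  List.idxOf_lt_length_iff.mp (h.trans_le List.idxOf_le_length)

theorem List.Nodup.prefers_getElem_iff {L : List α} (hL : L.Nodup) {i j : ℕ}
    (hi : i < L.length) (hj : j < L.length) : Prefers L L[i] L[j] ↔ i < j := by
  rw [Prefers, hL.idxOf_getElem, hL.idxOf_getElem]

theorem prefers_of_head?_eq_some_s19 {l : List α} {t s : α} (ht : l.head? = some t) (hst : s ≠ t) :
    Prefers l t s := by
  obtain ⟨w, rfl⟩ : ∃ w, l = t :: w := by
    cases l with
    | nil => simp at ht
    | cons a w => exact ⟨w, by simpa using ht⟩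
  simp [Prefers, List.idxOf_cons_ne _ hst.symm]

theorem not_prefers_of_head?_filter_eq_some {p : α → Bool} {l : List α} {b c : α}
    (hc : (l.filter p).head? = some c) (hb : p b) : ¬ Prefers l b c := by
  rw [List.head?_filter, List.find?_eq_some_iff_append] at hc
  obtain ⟨hpc, as, bs, rfl, has⟩ := hc
  have hbas : b ∉ as := fun hb' => by simpa [hb] using has b hb'
  have hcas : c ∉ as := fun hc' => by simpa [hpc] using has c hc'
  simp [Prefers, List.idxOf_append_of_notMem hbas, List.idxOf_append_of_notMem hcas]

theorem StrictlyBetween.mem_middle {L : List α} {a b c : α} (h : StrictlyBetween L a b c) :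
    b ∈ L := by
  rcases h with ⟨-, hbc⟩ | ⟨-, hba⟩
  exacts [hbc.mem_left, hba.mem_left]

theorem StrictlyBetween.left_ne {L : List α} {a b c : α} (h : StrictlyBetween L a b c) :
    a ≠ b := by
  rcases h with ⟨hab, -⟩ | ⟨-, hba⟩
  exacts [hab.ne, hba.ne.symm]

theorem SinglePeaked.prefers_of_strictlyBetween {L v : List α} {t s c : α}
    (hsp : SinglePeaked L v) (ht : v.head? = some t) (htL : t ∈ L) (hcL : c ∈ L)
    (h : StrictlyBetween L t s c) : Prefers v s c :=
  hsp t s c htL h.mem_middle hcL h (prefers_of_head?_eq_some_s19 ht h.left_ne.symm)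

theorem SinglePeaked.head?_restrictList_eq_some_iff {L v : List α} {S : Finset α} {c : α}
    (hsp : SinglePeaked L v) (hvL : ∀ a ∈ v, a ∈ L) (hcL : c ∈ L) (hcS : c ∈ S)
    (hsep : ∀ t ∈ L, t ∉ S → ∃ s ∈ S, StrictlyBetween L t s c) :
    (restrictList S v).head? = some c ↔ v.head? = some c := by
  cases v with
  | nil => simp [restrictList]
  | cons t w =>
    by_cases htS : t ∈ S
    · simp [restrictList, htS]
    · have htc : t ≠ c := fun h => htS (h ▸ hcS)
      refine iff_of_false (fun hhead => ?_) (by simpa using htc)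
      obtain ⟨s, hsS, hbetween⟩ := hsep t (hvL t List.mem_cons_self) htS
      exact not_prefers_of_head?_filter_eq_some hhead (by simpa using hsS)
        (hsp.prefers_of_strictlyBetween rfl (hvL t List.mem_cons_self) hcL hbetween)

theorem List.Nodup.exists_strictlyBetween_of_neighbors_mem {L : List α} (hL : L.Nodup)
    {S : Finset α} {i : ℕ} (hi : i < L.length) (hc : L[i] ∈ S)
    (hprev : ∀ h : 0 < i, L[i - 1] ∈ S) (hnext : ∀ h : i + 1 < L.length, L[i + 1] ∈ S) :
    ∀ t ∈ L, t ∉ S → ∃ s ∈ S, StrictlyBetween L t s L[i] := by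
  intro t ht htS
  obtain ⟨k, hk, rfl⟩ := List.mem_iff_getElem.mp ht
  have hki : k ≠ i := by rintro rfl; exact htS hc
  rcases Nat.lt_or_gt_of_ne hki with hlt | hgt
  · have hk' : k ≠ i - 1 := by rintro rfl; exact htS (hprev (by omega))
    refine ⟨L[i - 1], hprev (by omega), Or.inl ⟨?_, ?_⟩⟩ <;>
      simp only [hL.prefers_getElem_iff] <;> omega
  · have hk' : k ≠ i + 1 := by rintro rfl; exact htS (hnext hk)
    refine ⟨L[i + 1], hnext (by omega), Or.inr ⟨?_, ?_⟩⟩ <;>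
      simp only [hL.prefers_getElem_iff] <;> omega

theorem pluralityScore_eq_of_neighbors_mem {C : Finset α} {L : List α} (hL : IsVoteOn C L)
    {V : List (List α)} (hV : ∀ v ∈ V, IsVoteOn C v ∧ SinglePeaked L v)
    {S : Finset α} {i : ℕ} (hi : i < L.length) (hc : L[i] ∈ S)
    (hprev : ∀ h : 0 < i, L[i - 1] ∈ S) (hnext : ∀ h : i + 1 < L.length, L[i + 1] ∈ S) :
    pluralityScore C V L[i] = pluralityScore S V L[i] := by
  refine List.countP_congr fun v hv => ?_
  obtain ⟨⟨-, hvC⟩, hsp⟩ := hV v hv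
  have hvL : ∀ a ∈ v, a ∈ L := fun a ha => (hL.2 a).mpr ((hvC a).mp ha)
  have hCv : restrictList C v = v :=
    List.filter_eq_self.mpr fun a ha => by simpa using (hvC a).mp ha
  simp only [decide_eq_true_eq, hCv,
    hsp.head?_restrictList_eq_some_iff hvL (List.getElem_mem hi) hc
      (hL.1.exists_strictlyBetween_of_neighbors_mem hi hc hprev hnext)]

/-- Lemma 3.4 of FHHR: in a single-peaked plurality election with axis
`c_1 L c_2 L ... L c_m`, `m ≥ 2`: (1) `c_1`'s plurality score in `(C, V)` equals its
score in `({c_1, c_2}, V)`; (2) for `2 ≤ i ≤ m - 1`, `c_i`'s score in `(C, V)` equals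
its score in `({c_{i-1}, c_i, c_{i+1}}, V)`; (3) `c_m`'s score in `(C, V)` equals its
score in `({c_{m-1}, c_m}, V)`. -/
theorem singlePeaked_plurality_local
    (C : Finset α) (L : List α) (hL : IsVoteOn C L) (hm : 2 ≤ L.length)
    (V : List (List α)) (hV : ∀ v ∈ V, IsVoteOn C v ∧ SinglePeaked L v) :
    (pluralityScore C V (L[0]'(by omega)) =
        pluralityScore {L[0]'(by omega), L[1]'(by omega)} V (L[0]'(by omega))) ∧
    (∀ j, ∀ hj : j + 1 < L.length, 1 ≤ j →
      pluralityScore C V (L[j]'(by omega)) =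
        pluralityScore {L[j - 1]'(by omega), L[j]'(by omega), L[j + 1]'hj} V
          (L[j]'(by omega))) ∧
    (pluralityScore C V (L[L.length - 1]'(by omega)) =
        pluralityScore {L[L.length - 2]'(by omega), L[L.length - 1]'(by omega)} V
          (L[L.length - 1]'(by omega))) := by
  refine ⟨?_, fun j _ _ => ?_, ?_⟩
  · exact pluralityScore_eq_of_neighbors_mem hL hV _ (by simp) (by omega) fun _ => by simp
  · exact pluralityScore_eq_of_neighbors_mem hL hV _ (by simp) (fun _ => by simp)
      fun _ => by simp
  · exact pluralityScore_eq_of_neighbors_mem hL hV _ (by simp)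
      (fun _ => by simp [Nat.sub_sub]) (by omega)
end
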